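/- arXiv:2401.06662 — 9 statements merged into one kernel-verified Lean document; each statement's English description precedes it below -/
import Mathlib

section
/- A word w over the nonnegative integers is stack sortable (i.e., applying the standard stack sorting algorithm, where the next input letter is pushed whenever it is less than or equal to the top of the stack and otherwise the top is popped to the output, yields a weakly increasing output) if and only if w avoids the pattern 120. -/
def Contains120 (w : List ℕ) : Prop :=
  ∃ i j k, i < j ∧ j < k ∧ k < w.length ∧ w.getD k 0 < w.getD i 0 ∧ w.getD i 0 < w.getD j 0

def Contains201 (w : List ℕ) : Prop :=
  ∃ i j k, i < j ∧ j < k ∧ k < w.length ∧ w.getD j 0 < w.getD k 0 ∧ w.getD k 0 < w.getD i 0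

def Contains210 (w : List ℕ) : Prop :=
  ∃ i j k, i < j ∧ j < k ∧ k < w.length ∧ w.getD k 0 < w.getD j 0 ∧ w.getD j 0 < w.getD i 0

def Contains1010 (w : List ℕ) : Prop :=
  ∃ i j k l, i < j ∧ j < k ∧ k < l ∧ l < w.length ∧
    w.getD j 0 = w.getD l 0 ∧ w.getD l 0 < w.getD i 0 ∧ w.getD i 0 = w.getD k 0

/-- The greedy stack sorting algorithm: push the next input letter whenever the stack is
empty or the letter is at most the top of the stack; otherwise pop the top to the output;
at the end pop all remaining entries. -/
def stackSortAux : List ℕ → List ℕ → List ℕ → List ℕ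
  | [], st, out => out ++ st
  | x :: xs, [], out => stackSortAux xs [x] out
  | x :: xs, t :: st, out =>
    if x ≤ t then stackSortAux xs (x :: t :: st) out
    else stackSortAux (x :: xs) st (out ++ [t])
termination_by input st _ => 2 * input.length + st.length

def stackSort (w : List ℕ) : List ℕ := stackSortAux w [] []

/-! The stack is always weakly increasing from top to bottom, and an entry `t` is popped exactly
when a strictly larger letter arrives; the output then goes wrong precisely if a letter smaller
than `t` is still to come, i.e. if `t`, the larger letter and that smaller one form a 120. -/

def Completes120 (t : ℕ) (w : List ℕ) : Prop :=
  ∃ j k, j < k ∧ k < w.length ∧ w.getD k 0 < t ∧ t < w.getD j 0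

theorem contains120_cons (x : ℕ) (xs : List ℕ) :
    Contains120 (x :: xs) ↔ Contains120 xs ∨ Completes120 x xs := by
  constructor
  · rintro ⟨_ | i, _ | j, _ | k, h⟩ <;> simp at h
    · exact Or.inr ⟨j, k, h⟩
    · exact Or.inl ⟨i, j, k, h⟩
  · rintro (⟨i, j, k, h⟩ | ⟨j, k, h⟩)
    · exact ⟨i + 1, j + 1, k + 1, by simpa using h⟩
    · exact ⟨0, j + 1, k + 1, by simpa using h⟩

theorem completes120_cons (t x : ℕ) (xs : List ℕ) :
    Completes120 t (x :: xs) ↔ (t < x ∧ ∃ a ∈ xs, a < t) ∨ Completes120 t xs := by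
  constructor
  · rintro ⟨_ | j, _ | k, h⟩ <;> simp at h
    · obtain ⟨hk, hkt, htx⟩ := h
      exact Or.inl ⟨htx, xs[k], List.getElem_mem hk, by simpa [hk] using hkt⟩
    · exact Or.inr ⟨j, k, h⟩
  · rintro (⟨htx, a, ha, hat⟩ | ⟨j, k, h⟩)
    · obtain ⟨k, hk, rfl⟩ := List.getElem_of_mem ha
      exact ⟨0, k + 1, by simpa [hk, htx] using hat⟩
    · exact ⟨j + 1, k + 1, by simpa using h⟩

theorem Completes120.exists_lt {t : ℕ} {w : List ℕ} (h : Completes120 t w) : ∃ a ∈ w, a < t := by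
  obtain ⟨j, k, -, hk, hkt, -⟩ := h
  exact ⟨w[k], List.getElem_mem hk, by simpa [hk] using hkt⟩

theorem completes120_cons_of_le {t x : ℕ} (h : x ≤ t) (xs : List ℕ) :
    Completes120 t (x :: xs) ↔ Completes120 t xs := by
  simp [completes120_cons, not_lt.2 h]

theorem completes120_cons_of_lt {t x : ℕ} (h : t < x) (xs : List ℕ) :
    Completes120 t (x :: xs) ↔ ∃ a ∈ xs, a < t := by
  rw [completes120_cons]
  exact ⟨fun h' => h'.elim And.right Completes120.exists_lt, fun h' => Or.inl ⟨h, h'⟩⟩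

theorem pairwise_stackSortAux_iff {xs st out : List ℕ} (hst : st.Pairwise (· ≤ ·)) :
    (stackSortAux xs st out).Pairwise (· ≤ ·) ↔
      (out ++ st).Pairwise (· ≤ ·) ∧ (∀ a ∈ out, ∀ b ∈ xs, a ≤ b) ∧
        ¬Contains120 xs ∧ ∀ t ∈ st, ¬Completes120 t xs := by
  induction xs, st, out using stackSortAux.induct with
  | case1 st out =>
    simp [stackSortAux, Contains120, Completes120]
  | case2 x xs out ih =>
    rw [stackSortAux, ih (List.pairwise_singleton _ x), contains120_cons]
    simp only [List.pairwise_append, List.pairwise_singleton, List.forall_mem_cons,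
      List.not_mem_nil, IsEmpty.forall_iff, forall_const, not_or, List.append_nil, forall_and]
    tauto
  | case3 x xs t st out hxt ih =>
    have hx : ∀ s ∈ t :: st, x ≤ s :=
      List.forall_mem_cons.2 ⟨hxt, fun s hs => hxt.trans (List.rel_of_pairwise_cons hst hs)⟩
    have hcomp :
        (∀ s ∈ t :: st, ¬Completes120 s (x :: xs)) ↔ ∀ s ∈ t :: st, ¬Completes120 s xs :=
      forall₂_congr fun s hs => not_congr (completes120_cons_of_le (hx s hs) xs)
    rw [stackSortAux, if_pos hxt, ih (hst.cons hx), contains120_cons, hcomp]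
    simp only [List.pairwise_append, List.pairwise_cons, List.forall_mem_cons, not_or,
      forall_and] at hx ⊢
    tauto
  | case4 x xs t st out hxt ih =>
    have htx : t < x := not_le.1 hxt
    have hpop : (∀ b ∈ x :: xs, t ≤ b) ↔ ¬Completes120 t (x :: xs) := by
      rw [completes120_cons_of_lt htx, List.forall_mem_cons]
      push Not
      exact and_iff_right htx.le
    rw [stackSortAux, if_neg hxt, ih hst.of_cons, List.append_assoc,
      List.singleton_append]
    simp only [List.forall_mem_append, List.forall_mem_singleton, ← hpop, List.forall_mem_cons]
    tauto

/-- A word over the nonnegative integers is stack sortable iff it avoids the pattern 120. -/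
theorem stack_sortable_iff_avoids_120 (w : List ℕ) :
    List.Pairwise (· ≤ ·) (stackSort w) ↔ ¬ Contains120 w := by
  simp [stackSort, pairwise_stackSortAux_iff List.Pairwise.nil]
end

section
/- A word over the nonnegative integers is layered if and only if it avoids the patterns 120, 201, and 1010. -/
def IsLayeredDecomp (w : List ℕ) (L : List (List ℕ)) : Prop :=
  w = L.flatten ∧ (∀ t ∈ L, t ≠ [] ∧ List.Chain' (fun a b => b ≤ a) t) ∧
    List.Chain' (fun t t' => t.getLastD 0 < t'.headI ∧ t.headI ≤ t'.getLastD 0) L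

def IsLayered (w : List ℕ) : Prop := ∃ L, IsLayeredDecomp w L

def HasLayers (w : List ℕ) (k : ℕ) : Prop := ∃ L, IsLayeredDecomp w L ∧ L.length = k

/-!
In a layered word every letter of a layer is at most every letter of each later layer. Each of
the patterns 120, 201 and 1010 is unsplittable: no nonempty weakly decreasing prefix of it is
bounded above by all of the remaining letters. So an occurrence of such a pattern cannot use
letters of the first layer, and by induction on the layers it does not occur at all.

Conversely, cut a word avoiding the three patterns into its maximal weakly decreasing runs. For
consecutive runs with first and last letters `a, b` and `c, d` we have `b < c` by maximality, and
comparing `b` with `d` and `a` with `c` shows that `d < a` would produce one of the patterns.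
-/

namespace List

variable {α : Type*} {t : List α}

theorem getLastD_eq_getLast (d : α) (ht : t ≠ []) : t.getLastD d = t.getLast ht := by
  simp [getLast?_eq_some_getLast ht]

theorem getLastD_mem (d : α) (ht : t ≠ []) : t.getLastD d ∈ t := by
  rw [getLastD_eq_getLast d ht]
  exact getLast_mem ht

theorem getLastD_le_of_mem [Preorder α] (d : α) (ht : t.IsChain (fun a b => b ≤ a)) {x : α}
    (hx : x ∈ t) : t.getLastD d ≤ x := by
  rw [getLastD_eq_getLast d (ne_nil_of_mem hx)]
  exact ht.pairwise.rel_getLast hx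

variable [Inhabited α]

theorem headI_eq_head (ht : t ≠ []) : t.headI = t.head ht := by
  cases t with
  | nil => contradiction
  | cons a t => rfl

theorem headI_mem (ht : t ≠ []) : t.headI ∈ t := by
  rw [headI_eq_head ht]
  exact head_mem ht

theorem le_headI_of_mem [Preorder α] (ht : t.IsChain (fun a b => b ≤ a)) {x : α}
    (hx : x ∈ t) : x ≤ t.headI := by
  rw [headI_eq_head (ne_nil_of_mem hx)]
  exact ht.pairwise.rel_head hx

theorem headI_getLastD_sublist {d : α} (ht : t ≠ []) (h : t.getLastD d ≠ t.headI) :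
    [t.headI, t.getLastD d] <+ t := by
  obtain ⟨a, r, rfl⟩ := exists_cons_of_ne_nil ht
  obtain ⟨hr, hlast⟩ : r ≠ [] ∧ (a :: r).getLastD d = r.getLastD d := by
    cases r <;> simp_all
  rw [hlast]
  exact (singleton_sublist.mpr (getLastD_mem d hr)).cons_cons a

end List

open List

namespace IsLayeredDecomp

variable {w t : List ℕ} {L : List (List ℕ)}

theorem tail (hL : IsLayeredDecomp w (t :: L)) : IsLayeredDecomp L.flatten L :=
  ⟨rfl, fun u hu => hL.2.1 u (mem_cons_of_mem t hu), hL.2.2.tail⟩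

theorem le_of_mem_of_mem_flatten (hL : IsLayeredDecomp w (t :: L)) {a b : ℕ} (ha : a ∈ t)
    (hb : b ∈ L.flatten) : a ≤ b := by
  induction L generalizing w t a with
  | nil => simp at hb
  | cons t' L ih =>
    obtain ⟨-, hdec⟩ := hL.2.1 t mem_cons_self
    obtain ⟨ht', hdec'⟩ := hL.2.1 t' (mem_cons_of_mem t mem_cons_self)
    have hstep : t.headI ≤ t'.getLastD 0 := (isChain_cons_cons.mp hL.2.2).1.2
    have hlast : t'.getLastD 0 ≤ b := by
      rcases mem_append.mp (flatten_cons ▸ hb) with hb | hb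
      · exact getLastD_le_of_mem 0 hdec' hb
      · exact ih hL.tail (getLastD_mem 0 ht') hb
    exact (le_headI_of_mem hdec ha).trans (hstep.trans hlast)

end IsLayeredDecomp

def Unsplittable (p : List ℕ) : Prop :=
  ∀ s₁ s₂, s₁ ++ s₂ = p → s₁ ≠ [] → s₁.Pairwise (fun a b => b ≤ a) →
    ∃ a ∈ s₁, ∃ b ∈ s₂, b < a

theorem Unsplittable.not_sublist {p w : List ℕ} {L : List (List ℕ)} (hp : Unsplittable p)
    (hne : p ≠ []) (hL : IsLayeredDecomp w L) : ¬ p <+ w := by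
  induction L generalizing w with
  | nil => simpa [hL.1] using hne
  | cons t L ih =>
    intro hsub
    rw [hL.1, flatten_cons, sublist_append_iff] at hsub
    obtain ⟨s₁, s₂, rfl, h₁, h₂⟩ := hsub
    by_cases hs₁ : s₁ = []
    · subst hs₁
      exact ih hL.tail h₂
    · obtain ⟨a, ha, b, hb, hba⟩ :=
        hp s₁ s₂ rfl hs₁ ((hL.2.1 t mem_cons_self).2.pairwise.sublist h₁)
      exact (hL.le_of_mem_of_mem_flatten (h₁.subset ha) (h₂.subset hb)).not_gt hba

theorem unsplittable_120 {x y z : ℕ} (hzx : z < x) (hxy : x < y) : Unsplittable [x, y, z] := by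
  intro s₁ s₂ h hne hdec
  rcases s₁ with _ | ⟨a, _ | ⟨b, _ | ⟨c, s₁⟩⟩⟩ <;> simp_all
  all_goals omega

theorem unsplittable_201 {x y z : ℕ} (hyz : y < z) (hzx : z < x) : Unsplittable [x, y, z] := by
  intro s₁ s₂ h hne hdec
  rcases s₁ with _ | ⟨a, _ | ⟨b, _ | ⟨c, s₁⟩⟩⟩ <;> simp_all
  all_goals omega

theorem unsplittable_1010 {x y : ℕ} (hyx : y < x) : Unsplittable [x, y, x, y] := by
  intro s₁ s₂ h hne hdec
  rcases s₁ with _ | ⟨a, _ | ⟨b, _ | ⟨c, _ | ⟨d, s₁⟩⟩⟩⟩ <;> simp_all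
  all_goals omega

section Occurrences

variable {w : List ℕ}

theorem exists_indices_iff_sublist₃ {P : ℕ → ℕ → ℕ → Prop} :
    (∃ i j k, i < j ∧ j < k ∧ k < w.length ∧ P (w.getD i 0) (w.getD j 0) (w.getD k 0)) ↔
      ∃ x y z, P x y z ∧ [x, y, z] <+ w := by
  constructor
  · rintro ⟨i, j, k, hij, hjk, hk, hP⟩
    refine ⟨_, _, _, hP, ?_⟩
    rw [getD_eq_getElem _ _ (by omega), getD_eq_getElem _ _ (by omega), getD_eq_getElem _ _ hk]
    exact map_getElem_sublist (is := [⟨i, by omega⟩, ⟨j, by omega⟩, ⟨k, hk⟩])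
      (by simp [Fin.mk_lt_mk]; omega)
  · rintro ⟨x, y, z, hP, hs⟩
    obtain ⟨is, hp, his⟩ := sublist_eq_map_getElem hs
    obtain ⟨i, j, k, rfl⟩ := length_eq_three.mp (by simpa using congrArg length hp.symm)
    simp only [map_cons, map_nil, cons.injEq] at hp
    obtain ⟨rfl, rfl, rfl, -⟩ := hp
    simp only [pairwise_cons, mem_cons, forall_eq_or_imp] at his
    exact ⟨i, j, k, his.1.1, his.2.1.1, k.2, by simpa [getD_eq_getElem] using hP⟩

theorem exists_indices_iff_sublist₄ {P : ℕ → ℕ → ℕ → ℕ → Prop} :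
    (∃ i j k l, i < j ∧ j < k ∧ k < l ∧ l < w.length ∧
      P (w.getD i 0) (w.getD j 0) (w.getD k 0) (w.getD l 0)) ↔
      ∃ x y z u, P x y z u ∧ [x, y, z, u] <+ w := by
  constructor
  · rintro ⟨i, j, k, l, hij, hjk, hkl, hl, hP⟩
    refine ⟨_, _, _, _, hP, ?_⟩
    rw [getD_eq_getElem _ _ (by omega), getD_eq_getElem _ _ (by omega),
      getD_eq_getElem _ _ (by omega), getD_eq_getElem _ _ hl]
    exact map_getElem_sublist
      (is := [⟨i, by omega⟩, ⟨j, by omega⟩, ⟨k, by omega⟩, ⟨l, hl⟩])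
      (by simp [Fin.mk_lt_mk]; omega)
  · rintro ⟨x, y, z, u, hP, hs⟩
    obtain ⟨is, hp, his⟩ := sublist_eq_map_getElem hs
    obtain ⟨i, j, k, l, rfl⟩ := length_eq_four.mp (by simpa using congrArg length hp.symm)
    simp only [map_cons, map_nil, cons.injEq] at hp
    obtain ⟨rfl, rfl, rfl, rfl, -⟩ := hp
    simp only [pairwise_cons, mem_cons, forall_eq_or_imp] at his
    exact ⟨i, j, k, l, his.1.1, his.2.1.1, his.2.2.1.1, l.2,
      by simpa [getD_eq_getElem] using hP⟩

theorem contains120_iff_sublist :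
    Contains120 w ↔ ∃ x y z, (z < x ∧ x < y) ∧ [x, y, z] <+ w :=
  exists_indices_iff_sublist₃ (P := fun x y z => z < x ∧ x < y)

theorem contains201_iff_sublist :
    Contains201 w ↔ ∃ x y z, (y < z ∧ z < x) ∧ [x, y, z] <+ w :=
  exists_indices_iff_sublist₃ (P := fun x y z => y < z ∧ z < x)

theorem contains1010_iff_sublist :
    Contains1010 w ↔ ∃ x y z u, (y = u ∧ u < x ∧ x = z) ∧ [x, y, z, u] <+ w :=
  exists_indices_iff_sublist₄ (P := fun x y z u => y = u ∧ u < x ∧ x = z)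

end Occurrences

namespace IsLayered

variable {w : List ℕ} (hw : IsLayered w)
include hw

theorem not_contains120 : ¬ Contains120 w := by
  obtain ⟨L, hL⟩ := hw
  rw [contains120_iff_sublist]
  rintro ⟨x, y, z, ⟨hzx, hxy⟩, hs⟩
  exact (unsplittable_120 hzx hxy).not_sublist (cons_ne_nil _ _) hL hs

theorem not_contains201 : ¬ Contains201 w := by
  obtain ⟨L, hL⟩ := hw
  rw [contains201_iff_sublist]
  rintro ⟨x, y, z, ⟨hyz, hzx⟩, hs⟩
  exact (unsplittable_201 hyz hzx).not_sublist (cons_ne_nil _ _) hL hs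

theorem not_contains1010 : ¬ Contains1010 w := by
  obtain ⟨L, hL⟩ := hw
  rw [contains1010_iff_sublist]
  rintro ⟨x, y, _, _, ⟨rfl, hyx, rfl⟩, hs⟩
  exact (unsplittable_1010 hyx).not_sublist (cons_ne_nil _ _) hL hs

end IsLayered

section Avoiding

variable {w : List ℕ} (h120 : ¬ Contains120 w) (h201 : ¬ Contains201 w)
  (h1010 : ¬ Contains1010 w)
include h120 h201 h1010

theorem headI_le_getLastD_of_avoids {t t' : List ℕ} (hsub : t ++ t' <+ w) (ht : t ≠ [])
    (ht' : t' ≠ []) (hlt : t.getLastD 0 < t'.headI) :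
    t.headI ≤ t'.getLastD 0 := by
  rw [contains120_iff_sublist] at h120
  rw [contains201_iff_sublist] at h201
  rw [contains1010_iff_sublist] at h1010
  have ha : [t.headI] <+ t := singleton_sublist.mpr (headI_mem ht)
  have hb : [t.getLastD 0] <+ t := singleton_sublist.mpr (getLastD_mem 0 ht)
  have hc : [t'.headI] <+ t' := singleton_sublist.mpr (headI_mem ht')
  have hd : [t'.getLastD 0] <+ t' := singleton_sublist.mpr (getLastD_mem 0 ht')
  have hab : t.getLastD 0 < t.headI → _ := fun h => headI_getLastD_sublist ht h.ne
  have hcd : t'.getLastD 0 < t'.headI → _ := fun h => headI_getLastD_sublist ht' h.ne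
  generalize t.headI = a, t.getLastD 0 = b, t'.headI = c, t'.getLastD 0 = d at *
  by_contra! hda
  rcases lt_trichotomy b d with hbd | rfl | hdb
  · exact h201 ⟨a, b, d, ⟨hbd, hda⟩, ((hab (hbd.trans hda)).append hd).trans hsub⟩
  · rcases lt_trichotomy a c with hac | rfl | hca
    · exact h120 ⟨a, c, b, ⟨hda, hac⟩, (ha.append (hcd (hda.trans hac))).trans hsub⟩
    · exact h1010 ⟨a, b, a, b, ⟨rfl, hda, rfl⟩, ((hab hda).append (hcd hda)).trans hsub⟩
    · exact h201 ⟨a, b, c, ⟨hlt, hca⟩, ((hab (hlt.trans hca)).append hc).trans hsub⟩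
  · exact h120 ⟨b, c, d, ⟨hdb, hlt⟩, (hb.append (hcd (hdb.trans hlt))).trans hsub⟩

theorem isChain_layered_of_avoids {L : List (List ℕ)} (hsub : L.flatten <+ w)
    (hL : ∀ t ∈ L, t ≠ []) (hasc : L.IsChain (fun t t' => t.getLastD 0 < t'.headI)) :
    L.IsChain (fun t t' => t.getLastD 0 < t'.headI ∧ t.headI ≤ t'.getLastD 0) := by
  induction L with
  | nil => exact isChain_nil
  | cons t L ih =>
    cases L with
    | nil => exact isChain_singleton t
    | cons t' L =>
      rw [isChain_cons_cons] at hasc ⊢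
      have htt' : t ++ t' <+ w := by
        simpa using (sublist_append_left (t ++ t') L.flatten).trans (by simpa using hsub)
      have hstep : t.headI ≤ t'.getLastD 0 :=
        headI_le_getLastD_of_avoids h120 h201 h1010 htt' (hL t mem_cons_self)
          (hL t' (mem_cons_of_mem t mem_cons_self)) hasc.1
      exact ⟨⟨hasc.1, hstep⟩, ih ((sublist_append_right t _).trans hsub)
        (fun u hu => hL u (mem_cons_of_mem t hu)) hasc.2⟩

theorem isLayered_of_avoids : IsLayered w := by
  set L := w.splitBy (fun a b => decide (b ≤ a))
  have hflat : L.flatten = w := flatten_splitBy _ w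
  have hne : ∀ t ∈ L, t ≠ [] := fun _ => ne_nil_of_mem_splitBy
  have hdec : ∀ t ∈ L, t.IsChain (fun a b => b ≤ a) := fun _ ht =>
    (isChain_of_mem_splitBy ht).imp (by simp)
  have hasc : L.IsChain (fun t t' => t.getLastD 0 < t'.headI) :=
    (isChain_getLast_head_splitBy _ w).imp fun t t' ⟨ht, ht', h⟩ => by
      rw [getLastD_eq_getLast 0 ht, headI_eq_head ht']
      simpa using h
  exact ⟨L, hflat.symm, fun t ht => ⟨hne t ht, hdec t ht⟩,
    isChain_layered_of_avoids h120 h201 h1010 (hflat ▸ Sublist.refl w) hne hasc⟩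

end Avoiding

/-- A word is layered iff it avoids the patterns 120, 201 and 1010. -/
theorem layered_iff_avoids (w : List ℕ) :
    IsLayered w ↔ ¬ Contains120 w ∧ ¬ Contains201 w ∧ ¬ Contains1010 w :=
  ⟨fun hw => ⟨hw.not_contains120, hw.not_contains201, hw.not_contains1010⟩,
    fun ⟨h120, h201, h1010⟩ => isLayered_of_avoids h120 h201 h1010⟩
end

section
/- The number of pop stack sortable inversion sequences of length n with exactly 2 layers equals the Eulerian number E(n,2), the number of permutations of length n with exactly one descent. -/
def IsInvSeq (e : List ℕ) : Prop := ∀ i < e.length, e.getD i 0 ≤ i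

/-- The number of descents of a permutation of Fin n. -/
def descentCount {n : ℕ} (σ : Equiv.Perm (Fin n)) : ℕ :=
  (Finset.univ.filter fun i : Fin n => ∃ j : Fin n, (j : ℕ) = (i : ℕ) + 1 ∧ σ j < σ i).card

/-!
Both sets are in bijection with the subsets `A` of `Fin n` that are not lower sets.

An inversion sequence with two layers is `0^a d` with `d` weakly decreasing and
`0 < max d ≤ a`. Listing the elements of `A` in decreasing order and recording how many
non-elements of `A` lie below each one gives such a `d` of length `#A`, with `a = n - #A`;
conversely `A` is recovered from `d` since the `i`-th smallest element of `A` is `i` plus its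
gap (stars and bars). The gaps are not all zero exactly when `A` is not a lower set.

The permutation listing `A` increasingly and then `Aᶜ` increasingly can only descend where the
two blocks meet, and it does so exactly when `A` is not a lower set. Conversely a permutation
with a single descent at `k` is the one built from the image of `{0, …, k}`.
-/

theorem List.le_headI_of_pairwise_ge {d : List ℕ} (hd : d.Pairwise (· ≥ ·)) {x : ℕ}
    (hx : x ∈ d) : x ≤ d.headI := by
  cases d with
  | nil => simp at hx
  | cons y d =>
    rcases List.mem_cons.mp hx with rfl | hx
    · exact le_rfl
    · exact (List.pairwise_cons.mp hd).1 x hx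

theorem isInvSeq_replicate_zero_append {a : ℕ} {d : List ℕ} (hd : ∀ x ∈ d, x ≤ a) :
    IsInvSeq (List.replicate a 0 ++ d) := by
  intro i hi
  rw [List.getD_eq_getElem _ _ hi]
  rcases lt_or_ge i a with hia | hia
  · simp [hia]
  · rw [List.getElem_append_right (by simpa using hia)]
    exact (hd _ (List.getElem_mem _)).trans hia

theorem hasLayers_two_replicate_zero_append {a : ℕ} {d : List ℕ} (ha : 0 < a)
    (hd : d.Pairwise (· ≥ ·)) (hpos : 0 < d.headI) : HasLayers (List.replicate a 0 ++ d) 2 := by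
  have hdne : d ≠ [] := by rintro rfl; simp at hpos
  obtain ⟨m, rfl⟩ := Nat.exists_eq_add_one_of_ne_zero ha.ne'
  refine ⟨[List.replicate (m + 1) 0, d], ⟨by simp, ?_, ?_⟩, rfl⟩
  · intro t ht
    simp only [List.mem_cons, List.not_mem_nil, or_false] at ht
    rcases ht with rfl | rfl
    · exact ⟨by simp,
        List.isChain_iff_pairwise.mpr (List.pairwise_replicate.mpr (.inr le_rfl))⟩
    · exact ⟨hdne, List.isChain_iff_pairwise.mpr hd⟩
  · exact List.isChain_pair.mpr
      ⟨by simpa [List.getLastD_eq_getLast?, List.getLast?_replicate] using hpos,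
        by simp [List.replicate_succ]⟩

theorem exists_replicate_zero_append_of_hasLayers_two {e : List ℕ} (he : IsInvSeq e)
    (hL : HasLayers e 2) : ∃ a d, e = List.replicate a 0 ++ d ∧ d.Pairwise (· ≥ ·) ∧
      (∃ x ∈ d, 0 < x) ∧ ∀ x ∈ d, x ≤ a := by
  obtain ⟨L, ⟨rfl, hlayers, hchain⟩, hlen⟩ := hL
  obtain ⟨t, u, rfl⟩ := List.length_eq_two.mp hlen
  obtain ⟨ht, htdec⟩ := hlayers t (by simp)
  obtain ⟨hu, hudec⟩ := hlayers u (by simp)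
  obtain ⟨x, t, rfl⟩ := List.exists_cons_of_ne_nil ht
  obtain ⟨y, u, rfl⟩ := List.exists_cons_of_ne_nil hu
  replace htdec := List.isChain_iff_pairwise.mp htdec
  replace hudec := List.isChain_iff_pairwise.mp hudec
  have hx : x = 0 := Nat.le_zero.mp (by simpa using he 0 (by simp))
  have hy : y ≤ t.length + 1 := by
    simpa [List.getD_append_right] using he (t.length + 1) (by simp)
  have hzeros : x :: t = List.replicate (t.length + 1) 0 := List.eq_replicate_iff.mpr
    ⟨rfl, fun z hz => Nat.le_zero.mp (hx ▸ List.le_headI_of_pairwise_ge htdec hz)⟩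
  have hpos : (x :: t).getLastD 0 < y := by simpa using (List.isChain_pair.mp hchain).1
  rw [hzeros] at hpos
  refine ⟨t.length + 1, y :: u, by simp [← hzeros], hudec, ⟨y, List.mem_cons_self, ?_⟩,
    fun z hz => (List.le_headI_of_pairwise_ge hudec hz).trans hy⟩
  simpa [List.getLastD_eq_getLast?, List.getLast?_replicate] using hpos

theorem isTwoLayerInvSeq_iff {n : ℕ} {e : List ℕ} :
    e.length = n ∧ IsInvSeq e ∧ HasLayers e 2 ↔ ∃ a d, e = List.replicate a 0 ++ d ∧
      d.Pairwise (· ≥ ·) ∧ (∃ x ∈ d, 0 < x) ∧ (∀ x ∈ d, x ≤ a) ∧ a + d.length = n := by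
  constructor
  · rintro ⟨rfl, he, hL⟩
    obtain ⟨a, d, rfl, hd, hpos, hle⟩ := exists_replicate_zero_append_of_hasLayers_two he hL
    exact ⟨a, d, rfl, hd, hpos, hle, by simp⟩
  · rintro ⟨a, d, rfl, hd, ⟨x, hx, hx0⟩, hle, rfl⟩
    refine ⟨by simp, isInvSeq_replicate_zero_append hle,
      hasLayers_two_replicate_zero_append (hx0.trans_le (hle x hx)) hd
        (hx0.trans_le (List.le_headI_of_pairwise_ge hd hx))⟩

theorem List.replicate_zero_append_inj {a a' : ℕ} {d d' : List ℕ} (hd : 0 < d.headI)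
    (hd' : 0 < d'.headI) (h : List.replicate a 0 ++ d = List.replicate a' 0 ++ d') :
    a = a' ∧ d = d' := by
  induction a generalizing a' with
  | zero =>
    cases a' with
    | zero => exact ⟨rfl, h⟩
    | succ a' =>
      simp only [List.replicate_zero, List.nil_append] at h
      simp [h, List.replicate_succ] at hd
  | succ a ih =>
    cases a' with
    | zero =>
      simp only [List.replicate_zero, List.nil_append] at h
      simp [← h, List.replicate_succ] at hd'
    | succ a' =>
      simp only [List.replicate_succ, List.cons_append, List.cons.injEq, true_and] at h
      exact ⟨congrArg (· + 1) (ih h).1, (ih h).2⟩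

open Finset

variable {n : ℕ}

def gapBelow (A : Finset (Fin n)) (x : Fin n) : ℕ := #(Iio x \ A)

theorem gapBelow_mono (A : Finset (Fin n)) : Monotone (gapBelow A) := fun _ _ hxy =>
  card_le_card (sdiff_subset_sdiff (Iio_subset_Iio hxy) subset_rfl)

theorem gapBelow_le (A : Finset (Fin n)) (x : Fin n) : gapBelow A x ≤ n - #A := by
  calc gapBelow A x ≤ #Aᶜ := card_le_card fun y hy => mem_compl.mpr (mem_sdiff.mp hy).2
    _ = n - #A := by rw [card_compl, Fintype.card_fin]

theorem isLowerSet_iff_forall_gapBelow_eq_zero {A : Finset (Fin n)} :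
    IsLowerSet (A : Set (Fin n)) ↔ ∀ x ∈ A, gapBelow A x = 0 := by
  simp only [gapBelow, card_eq_zero, sdiff_eq_empty_iff_subset, subset_iff, mem_Iio]
  constructor
  · exact fun hA x hx y hyx => hA hyx.le hx
  · intro hA x y hyx hx
    rcases hyx.eq_or_lt with rfl | hyx
    exacts [hx, hA x hx hyx]

theorem card_Iio_orderEmbOfFin_inter {A : Finset (Fin n)} {k : ℕ} (h : #A = k) (i : Fin k) :
    #(Iio (A.orderEmbOfFin h i) ∩ A) = i := by
  have : Iio (A.orderEmbOfFin h i) ∩ A = (Iio i).map (A.orderEmbOfFin h).toEmbedding := by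
    ext x
    simp only [mem_inter, mem_Iio, mem_map, RelEmbedding.coe_toEmbedding]
    constructor
    · rintro ⟨hxi, hx⟩
      obtain ⟨j, rfl⟩ : x ∈ Set.range (A.orderEmbOfFin h) := by
        rwa [range_orderEmbOfFin]
      exact ⟨j, (A.orderEmbOfFin h).lt_iff_lt.mp hxi, rfl⟩
    · rintro ⟨j, hji, rfl⟩
      exact ⟨(A.orderEmbOfFin h).lt_iff_lt.mpr hji, orderEmbOfFin_mem A h j⟩
  rw [this, card_map, Fin.card_Iio]

theorem val_orderEmbOfFin_eq_add_gapBelow {A : Finset (Fin n)} {k : ℕ} (h : #A = k)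
    (i : Fin k) : (A.orderEmbOfFin h i : ℕ) = i + gapBelow A (A.orderEmbOfFin h i) := by
  rw [gapBelow, ← card_Iio_orderEmbOfFin_inter h i, card_inter_add_card_sdiff, Fin.card_Iio]

def gapList (A : Finset (Fin n)) : List ℕ :=
  List.ofFn fun j : Fin #A => gapBelow A (A.orderEmbOfFin rfl j.rev)

theorem gapList_eq_ofFn {A : Finset (Fin n)} {k : ℕ} (h : #A = k) :
    gapList A = List.ofFn fun j : Fin k => gapBelow A (A.orderEmbOfFin h j.rev) := by
  subst h; rfl

@[simp]
theorem length_gapList (A : Finset (Fin n)) : (gapList A).length = #A := List.length_ofFn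

theorem mem_gapList {A : Finset (Fin n)} {m : ℕ} :
    m ∈ gapList A ↔ ∃ x ∈ A, gapBelow A x = m := by
  simp only [gapList, List.mem_ofFn]
  constructor
  · rintro ⟨j, rfl⟩
    exact ⟨_, orderEmbOfFin_mem A rfl _, rfl⟩
  · rintro ⟨x, hx, rfl⟩
    obtain ⟨i, rfl⟩ : x ∈ Set.range (A.orderEmbOfFin rfl) := by rwa [range_orderEmbOfFin]
    exact ⟨i.rev, by rw [Fin.rev_rev]⟩

theorem pairwise_gapList (A : Finset (Fin n)) : (gapList A).Pairwise (· ≥ ·) :=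
  List.pairwise_ofFn.mpr fun _ _ hij =>
    gapBelow_mono A ((A.orderEmbOfFin rfl).monotone (Fin.rev_le_rev.mpr hij.le))

theorem exists_pos_mem_gapList_iff {A : Finset (Fin n)} :
    (∃ m ∈ gapList A, 0 < m) ↔ ¬IsLowerSet (A : Set (Fin n)) := by
  simp [isLowerSet_iff_forall_gapBelow_eq_zero, mem_gapList, Nat.pos_iff_ne_zero]

theorem gapList_injective : Function.Injective (gapList (n := n)) := by
  intro A B hAB
  have hcard : #B = #A := by simpa using congrArg List.length hAB.symm
  rw [gapList_eq_ofFn hcard] at hAB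
  have hemb : A.orderEmbOfFin rfl = B.orderEmbOfFin hcard := by
    ext i
    have hgap := congrFun (List.ofFn_injective hAB) i.rev
    simp only [Fin.rev_rev] at hgap
    rw [val_orderEmbOfFin_eq_add_gapBelow, val_orderEmbOfFin_eq_add_gapBelow, hgap]
  rw [← coe_inj, ← range_orderEmbOfFin A rfl, ← range_orderEmbOfFin B hcard, hemb]

theorem exists_gapList_eq {a : ℕ} {d : List ℕ} (hd : d.Pairwise (· ≥ ·)) (hle : ∀ x ∈ d, x ≤ a)
    (hn : a + d.length = n) : ∃ A : Finset (Fin n), gapList A = d := by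
  let f : Fin d.length → Fin n := fun i =>
    ⟨d[i.rev] + i, by have : d[i.rev] ≤ a := hle _ (List.getElem_mem i.rev.is_lt); omega⟩
  have hf : StrictMono f := by
    intro i j hij
    have : d[i.rev] ≤ d[j.rev] :=
      List.pairwise_iff_getElem.mp hd _ _ (Fin.is_lt _) (Fin.is_lt _) (Fin.rev_lt_rev.mpr hij)
    exact Fin.lt_def.mpr (by simp only [f]; omega)
  let F := OrderEmbedding.ofStrictMono f hf
  have hcard : #(univ.map F.toEmbedding) = d.length := by simp
  have hF : F = (univ.map F.toEmbedding).orderEmbOfFin hcard :=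
    orderEmbOfFin_unique' hcard (by simp)
  refine ⟨univ.map F.toEmbedding, ?_⟩
  rw [gapList_eq_ofFn hcard, ← hF]
  refine List.ext_getElem (by simp) fun j _ hj => ?_
  have hsplit := val_orderEmbOfFin_eq_add_gapBelow hcard (Fin.rev ⟨j, hj⟩)
  rw [← hF] at hsplit
  have hval : (F (Fin.rev ⟨j, hj⟩) : ℕ) = d[j] + (Fin.rev ⟨j, hj⟩ : ℕ) := by
    show d[(Fin.rev ⟨j, hj⟩).rev] + _ = _
    simp only [Fin.rev_rev, Fin.getElem_fin]
  rw [List.getElem_ofFn]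
  omega

def twoLayerSeq (A : Finset (Fin n)) : List ℕ := List.replicate (n - #A) 0 ++ gapList A

theorem bijOn_twoLayerSeq : Set.BijOn twoLayerSeq
    {A : Finset (Fin n) | ¬IsLowerSet (A : Set (Fin n))}
    {e | e.length = n ∧ IsInvSeq e ∧ HasLayers e 2} := by
  have hpos {A : Finset (Fin n)} (hA : ¬IsLowerSet (A : Set (Fin n))) :
      0 < (gapList A).headI := by
    obtain ⟨m, hm, hm0⟩ := exists_pos_mem_gapList_iff.mpr hA
    exact hm0.trans_le (List.le_headI_of_pairwise_ge (pairwise_gapList A) hm)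
  refine ⟨fun A hA => ?_, fun A hA B hB hAB => ?_, fun e he => ?_⟩
  · have hle (m : ℕ) (hm : m ∈ gapList A) : m ≤ n - #A := by
      obtain ⟨x, -, rfl⟩ := mem_gapList.mp hm
      exact gapBelow_le A x
    have hcard : #A ≤ n := by simpa using A.card_le_univ
    exact isTwoLayerInvSeq_iff.mpr ⟨_, _, rfl, pairwise_gapList A,
      exists_pos_mem_gapList_iff.mpr hA, hle, by simp; omega⟩
  · exact gapList_injective (List.replicate_zero_append_inj (hpos hA) (hpos hB) hAB).2
  · obtain ⟨a, d, rfl, hd, hdpos, hle, hn⟩ := isTwoLayerInvSeq_iff.mp he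
    obtain ⟨A, rfl⟩ := exists_gapList_eq hd hle hn
    refine ⟨A, exists_pos_mem_gapList_iff.mp hdpos, ?_⟩
    rw [length_gapList] at hn
    rw [twoLayerSeq, show n - #A = a by omega]

theorem Fin.mem_iff_lt_card_of_isLowerSet {s : Finset (Fin n)}
    (hs : IsLowerSet (s : Set (Fin n))) (i : Fin n) : i ∈ s ↔ (i : ℕ) < #s := by
  constructor
  · intro hi
    have : #(Iic i) ≤ #s := card_le_card fun j hj => hs (mem_Iic.mp hj) hi
    rwa [Fin.card_Iic] at this
  · intro hi
    by_contra hni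
    have : #s ≤ #(Iio i) := card_le_card fun j hj =>
      mem_Iio.mpr (lt_of_not_ge fun hij => hni (hs hij hj))
    rw [Fin.card_Iio] at this
    omega

/-- Stably sorting the indicator of `Aᶜ` lists `A` increasingly, then `Aᶜ` increasingly. -/
def grassmannianPerm (A : Finset (Fin n)) : Equiv.Perm (Fin n) :=
  Tuple.sort fun x => decide (x ∉ A)

theorem grassmannianPerm_apply_mem_iff (A : Finset (Fin n)) (i : Fin n) :
    grassmannianPerm A i ∈ A ↔ (i : ℕ) < #A := by
  let σ := grassmannianPerm A
  have hmem (j : Fin n) : j ∈ A.map σ.symm.toEmbedding ↔ σ j ∈ A := by simp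
  have hlower : IsLowerSet ((A.map σ.symm.toEmbedding : Finset (Fin n)) : Set (Fin n)) := by
    intro j k hkj hj
    have hmono : decide (σ k ∉ A) ≤ decide (σ j ∉ A) :=
      Tuple.monotone_sort (fun x => decide (x ∉ A)) hkj
    rw [mem_coe, hmem] at hj ⊢
    simpa [hj, Bool.le_iff_imp] using hmono
  rw [← hmem, Fin.mem_iff_lt_card_of_isLowerSet hlower, card_map]

theorem grassmannianPerm_lt (A : Finset (Fin n)) {i j : Fin n} (hij : i < j)
    (hblock : (i : ℕ) < #A ↔ (j : ℕ) < #A) : grassmannianPerm A i < grassmannianPerm A j :=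
  (Tuple.eq_sort_iff.mp rfl).2 i j hij <| by
    simp only [decide_eq_decide, not_iff_not]
    exact (grassmannianPerm_apply_mem_iff A i).trans
      (hblock.trans (grassmannianPerm_apply_mem_iff A j).symm)

theorem grassmannianPerm_le (A : Finset (Fin n)) {i j : Fin n} (hij : i ≤ j)
    (hblock : (i : ℕ) < #A ↔ (j : ℕ) < #A) : grassmannianPerm A i ≤ grassmannianPerm A j := by
  rcases hij.eq_or_lt with rfl | hij
  · rfl
  · exact (grassmannianPerm_lt A hij hblock).le

theorem grassmannianPerm_descent_eq_card {A : Finset (Fin n)} {i j : Fin n}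
    (hj : (j : ℕ) = i + 1) (hdes : grassmannianPerm A j < grassmannianPerm A i) : (j : ℕ) = #A := by
  by_contra hne
  exact (grassmannianPerm_lt A (Fin.lt_def.mpr (by omega)) (by omega)).not_gt hdes

theorem exists_descent_grassmannianPerm {A : Finset (Fin n)}
    (hA : ¬IsLowerSet (A : Set (Fin n))) : ∃ i j : Fin n, (j : ℕ) = i + 1 ∧ (j : ℕ) = #A ∧
      grassmannianPerm A j < grassmannianPerm A i := by
  simp only [IsLowerSet, not_forall] at hA
  obtain ⟨x, y, hyx, hx, hy⟩ := hA
  have hyx : y < x := lt_of_le_of_ne hyx (by rintro rfl; exact hy hx)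
  obtain ⟨p, rfl⟩ := (grassmannianPerm A).surjective x
  obtain ⟨q, rfl⟩ := (grassmannianPerm A).surjective y
  have hp : (p : ℕ) < #A := (grassmannianPerm_apply_mem_iff A p).mp hx
  have hq : #A ≤ (q : ℕ) := not_lt.mp ((grassmannianPerm_apply_mem_iff A q).not.mp hy)
  let i₀ : Fin n := ⟨#A - 1, by omega⟩
  let j₀ : Fin n := ⟨#A, by omega⟩
  have hpi : grassmannianPerm A p ≤ grassmannianPerm A i₀ :=
    grassmannianPerm_le A (Fin.le_def.mpr (by simp only [i₀]; omega)) (by simp only [i₀]; omega)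
  have hjq : grassmannianPerm A j₀ ≤ grassmannianPerm A q :=
    grassmannianPerm_le A (Fin.le_def.mpr (by simp only [j₀]; omega)) (by simp only [j₀]; omega)
  exact ⟨i₀, j₀, by simp only [i₀, j₀]; omega, rfl, hjq.trans_lt (hyx.trans_le hpi)⟩

theorem descentCount_grassmannianPerm {A : Finset (Fin n)}
    (hA : ¬IsLowerSet (A : Set (Fin n))) : descentCount (grassmannianPerm A) = 1 := by
  obtain ⟨i, j, hji, -, hdes⟩ := exists_descent_grassmannianPerm hA
  rw [descentCount, card_eq_one]
  refine ⟨i, eq_singleton_iff_unique_mem.mpr ⟨mem_filter.mpr ⟨mem_univ i, j, hji, hdes⟩, ?_⟩⟩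
  intro i' hi'
  obtain ⟨j', hj', hdes'⟩ := (mem_filter.mp hi').2
  have := grassmannianPerm_descent_eq_card hj' hdes'
  have := grassmannianPerm_descent_eq_card hji hdes
  exact Fin.ext (by omega)

theorem grassmannianPerm_injOn :
    Set.InjOn grassmannianPerm {A : Finset (Fin n) | ¬IsLowerSet (A : Set (Fin n))} := by
  intro A hA B _ hAB
  obtain ⟨i, j, hji, hjA, hdes⟩ := exists_descent_grassmannianPerm hA
  rw [hAB] at hdes
  have hcard : #A = #B := hjA.symm.trans (grassmannianPerm_descent_eq_card hji hdes)
  ext x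
  obtain ⟨p, rfl⟩ := (grassmannianPerm A).surjective x
  rw [grassmannianPerm_apply_mem_iff, hAB, grassmannianPerm_apply_mem_iff, hcard]

theorem exists_grassmannianPerm_eq {σ : Equiv.Perm (Fin n)} (hσ : descentCount σ = 1) :
    ∃ A : Finset (Fin n), ¬IsLowerSet (A : Set (Fin n)) ∧ grassmannianPerm A = σ := by
  obtain ⟨k, hk⟩ := card_eq_one.mp hσ
  have hdes (i : Fin n) : (∃ j : Fin n, (j : ℕ) = i + 1 ∧ σ j < σ i) ↔ i = k := by
    simpa using Finset.ext_iff.mp hk i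
  have hasc (a : Fin n) (ha : ¬IsMax a) (hak : a ≠ k) : σ a < σ (Order.succ a) := by
    have hsucc : ((Order.succ a : Fin n) : ℕ) = a + 1 :=
      (Nat.covBy_iff_add_one_eq.mp (Fin.covBy_iff.mp (Order.covBy_succ_of_not_isMax ha))).symm
    refine lt_of_le_of_ne (not_lt.mp fun h => hak ((hdes a).mp ⟨_, hsucc, h⟩)) ?_
    exact σ.injective.ne (Order.lt_succ_of_not_isMax ha).ne
  have hlow : StrictMonoOn σ (Set.Iic k) := strictMonoOn_of_lt_succ Set.ordConnected_Iic
    fun a ha _ hsa => hasc a ha ((Order.lt_succ_of_not_isMax ha).trans_le hsa).ne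
  have hhigh : StrictMonoOn σ (Set.Ioi k) := strictMonoOn_of_lt_succ Set.ordConnected_Ioi
    fun a ha hak _ => hasc a ha (ne_of_gt hak)
  obtain ⟨j, hj, hdesk⟩ := (hdes k).mpr rfl
  have hkj : k < j := Fin.lt_def.mpr (by omega)
  let A : Finset (Fin n) := univ.filter fun x => σ.symm x ≤ k
  have hmem (i : Fin n) : σ i ∈ A ↔ i ≤ k := by simp [A]
  refine ⟨A, fun hl => ?_, ?_⟩
  · exact not_le.mpr hkj ((hmem j).mp (hl hdesk.le ((hmem k).mpr le_rfl)))
  refine (Tuple.eq_sort_iff.mpr ⟨fun a b hab => ?_, fun a b hab heq => ?_⟩).symm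
  · simp only [Function.comp_apply, hmem, decide_not, Bool.le_iff_imp, Bool.not_eq_true',
      decide_eq_false_iff_not, not_le]
    exact fun h => lt_of_lt_of_le h hab
  · simp only [hmem, decide_eq_decide, not_iff_not] at heq
    by_cases hak : a ≤ k
    · exact hlow hak (heq.mp hak) hab
    · exact hhigh (not_le.mp hak) (not_le.mp (heq.not.mp hak)) hab

theorem bijOn_grassmannianPerm : Set.BijOn grassmannianPerm
    {A : Finset (Fin n) | ¬IsLowerSet (A : Set (Fin n))} {σ | descentCount σ = 1} :=
  ⟨fun _ hA => descentCount_grassmannianPerm hA, grassmannianPerm_injOn,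
    fun _ hσ => exists_grassmannianPerm_eq hσ⟩

/-- The number of pop stack sortable (i.e. layered) inversion sequences of length n with
exactly 2 layers equals the Eulerian number E(n,2), the number of permutations of length n
with exactly one descent. -/
theorem two_layer_inv_seq_eulerian (n : ℕ) :
    Set.ncard {e : List ℕ | e.length = n ∧ IsInvSeq e ∧ HasLayers e 2} =
      Set.ncard {σ : Equiv.Perm (Fin n) | descentCount σ = 1} :=
  bijOn_twoLayerSeq.ncard_eq.symm.trans bijOn_grassmannianPerm.ncard_eq
end

section
/- Under the Lehmer-code variant mapping a permutation π of length n to the inversion sequence e where e_{j} counts the inversions in which π_j is the smaller, later entry, the permutations with exactly one descent correspond bijectively to the layered inversion sequences with exactly 2 layers. -/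
/-- The Lehmer-code variant: the j-th entry counts the inversions in which the j-th entry
of the permutation is the smaller, later entry. -/
def lehmer {n : ℕ} (σ : Equiv.Perm (Fin n)) : List ℕ :=
  List.ofFn fun j : Fin n => (Finset.univ.filter fun i : Fin n => i < j ∧ σ j < σ i).card

open Finset

theorem Finset.strictAntiOn_card_filter_lt {α : Type*} [LinearOrder α] (s : Finset α) :
    StrictAntiOn (fun a => #{b ∈ s | a < b}) s := by
  intro a _ b hb hab
  refine card_lt_card ⟨fun c hc => ?_, fun hsub => ?_⟩
  · simp only [mem_filter] at hc ⊢
    exact ⟨hc.1, hab.trans hc.2⟩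
  · simpa using (mem_filter.1 (hsub (mem_filter.2 ⟨hb, hab⟩))).2

variable {n : ℕ}

def lehmerEntry (σ : Equiv.Perm (Fin n)) (j : Fin n) : ℕ := #{i | i < j ∧ σ j < σ i}

theorem lehmer_eq_ofFn (σ : Equiv.Perm (Fin n)) : lehmer σ = List.ofFn (lehmerEntry σ) := rfl

@[simp] theorem length_lehmer (σ : Equiv.Perm (Fin n)) : (lehmer σ).length = n := by
  simp [lehmer_eq_ofFn]

theorem getD_lehmer (σ : Equiv.Perm (Fin n)) {i : ℕ} (hi : i < n) :
    (lehmer σ).getD i 0 = lehmerEntry σ ⟨i, hi⟩ := by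
  simp [lehmer_eq_ofFn, List.getD_eq_getElem?_getD, hi]

theorem lehmerEntry_le (σ : Equiv.Perm (Fin n)) (j : Fin n) : lehmerEntry σ j ≤ j := by
  calc lehmerEntry σ j ≤ #(Iio j) := card_le_card fun i hi => by simp_all
    _ = j := Fin.card_Iio j

theorem lehmerEntry_eq_card_image_Iic (σ : Equiv.Perm (Fin n)) (j : Fin n) :
    lehmerEntry σ j = #{v ∈ (Iic j).image σ | σ j < v} := by
  rw [filter_image, card_image_of_injective _ σ.injective, lehmerEntry]
  congr 1
  ext i
  simp only [mem_filter, mem_univ, true_and, mem_Iic]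
  exact ⟨fun h => ⟨h.1.le, h.2⟩,
    fun h => ⟨h.1.lt_of_ne (by rintro rfl; exact lt_irrefl _ h.2), h.2⟩⟩

theorem image_Iic_eq_of_forall_lt {σ τ : Equiv.Perm (Fin n)} {j : Fin n}
    (h : ∀ i, j < i → σ i = τ i) : (Iic j).image σ = (Iic j).image τ := by
  have hIoi : (Ioi j).image σ = (Ioi j).image τ := image_congr fun i hi => h i (mem_Ioi.1 hi)
  have hcompl (π : Equiv.Perm (Fin n)) (v : Fin n) :
      v ∈ (Iic j).image π ↔ v ∉ (Ioi j).image π := by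
    simp only [mem_image, mem_Iic, mem_Ioi, not_exists, not_and]
    constructor
    · rintro ⟨a, ha, rfl⟩ b hb hba
      exact (ha.trans_lt hb).ne (π.injective hba).symm
    · exact fun hv => ⟨π.symm v, not_lt.1 fun hj => hv _ hj (π.apply_symm_apply v),
        π.apply_symm_apply v⟩
  ext v
  rw [hcompl, hcompl, hIoi]

theorem apply_eq_of_lehmerEntry_eq {σ τ : Equiv.Perm (Fin n)} {j : Fin n}
    (h : ∀ i, j < i → σ i = τ i) (hj : lehmerEntry σ j = lehmerEntry τ j) : σ j = τ j := by
  have hV := image_Iic_eq_of_forall_lt h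
  refine (strictAntiOn_card_filter_lt ((Iic j).image σ)).injOn
    (mem_image_of_mem σ (mem_Iic.2 le_rfl)) (hV ▸ mem_image_of_mem τ (mem_Iic.2 le_rfl)) ?_
  simpa only [lehmerEntry_eq_card_image_Iic, hV] using hj

theorem lehmer_injective : Function.Injective (lehmer (n := n)) := by
  intro σ τ h
  have hentry : lehmerEntry σ = lehmerEntry τ := List.ofFn_injective h
  by_contra hne
  have hS : ({i | σ i ≠ τ i} : Finset (Fin n)).Nonempty := by
    obtain ⟨i, hi⟩ := not_forall.1 (mt Equiv.ext hne)
    exact ⟨i, by simpa using hi⟩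
  have hmax : ∀ i, ({i | σ i ≠ τ i} : Finset (Fin n)).max' hS < i → σ i = τ i := by
    intro i hi
    by_contra hne
    exact (le_max' _ i (by simpa using hne)).not_gt hi
  exact (mem_filter.1 (max'_mem _ hS)).2
    (apply_eq_of_lehmerEntry_eq hmax (congrFun hentry _))

theorem isInvSeq_lehmer (σ : Equiv.Perm (Fin n)) : IsInvSeq (lehmer σ) := by
  intro i hi
  rw [length_lehmer] at hi
  rw [getD_lehmer σ hi]
  exact lehmerEntry_le σ ⟨i, hi⟩

theorem setOf_isInvSeq_subset_range :
    {e : List ℕ | e.length = n ∧ IsInvSeq e} ⊆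
      Set.range fun f : (j : Fin n) → Fin (j + 1) => List.ofFn fun j => (f j : ℕ) := by
  rintro e ⟨rfl, he⟩
  refine ⟨fun j => ⟨e.getD j 0, Nat.lt_succ_of_le (he j j.isLt)⟩, List.ext_getElem (by simp) ?_⟩
  intro _ _ _
  simp

theorem range_lehmer : Set.range (lehmer (n := n)) = {e | e.length = n ∧ IsInvSeq e} := by
  have hsub := setOf_isInvSeq_subset_range (n := n)
  have hinj : Function.Injective fun f : (j : Fin n) → Fin (j + 1) => List.ofFn fun j => (f j : ℕ) :=
    fun f g hfg => funext fun j => Fin.ext (congrFun (List.ofFn_injective hfg) j)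
  refine Set.eq_of_subset_of_ncard_le ?_ ?_ ((Set.finite_range _).subset hsub)
  · rintro _ ⟨σ, rfl⟩
    exact ⟨length_lehmer σ, isInvSeq_lehmer σ⟩
  calc _ ≤ _ := Set.ncard_le_ncard hsub (Set.finite_range _)
    _ = ∏ j : Fin n, (j + 1 : ℕ) := by
      simp [Set.ncard_range_of_injective hinj, Nat.card_eq_fintype_card]
    _ = n.factorial := by rw [Fin.prod_univ_eq_prod_range (· + 1), prod_range_add_one_eq_factorial]
    _ = _ := by simp [Set.ncard_range_of_injective lehmer_injective, Nat.card_eq_fintype_card,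
        Fintype.card_perm]

theorem lehmerEntry_lt_lehmerEntry_iff (σ : Equiv.Perm (Fin n)) {i j : Fin n}
    (hij : (j : ℕ) = i + 1) : lehmerEntry σ i < lehmerEntry σ j ↔ σ j < σ i := by
  have hlt : i < j := by rw [Fin.lt_def]; omega
  constructor
  · intro hentry
    by_contra hasc
    have hasc : σ i < σ j := (not_lt.1 hasc).lt_of_ne (σ.injective.ne hlt.ne)
    refine hentry.not_ge (card_le_card fun k hk => ?_)
    simp only [mem_filter, mem_univ, true_and] at hk ⊢
    have hki : k ≠ i := by rintro rfl; exact lt_asymm hasc hk.2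
    have hk_le : k ≤ i := Fin.le_def.2 (by have := Fin.lt_def.1 hk.1; omega)
    exact ⟨hk_le.lt_of_ne hki, hasc.trans hk.2⟩
  · intro hdesc
    refine card_lt_card ⟨fun k hk => ?_, fun hsub => ?_⟩
    · simp only [mem_filter, mem_univ, true_and] at hk ⊢
      exact ⟨hk.1.trans hlt, hdesc.trans hk.2⟩
    · exact lt_irrefl i (mem_filter.1 (hsub (by simpa using ⟨hlt, hdesc⟩))).2.1

def ascents (e : List ℕ) : Finset ℕ := {i ∈ range (e.length - 1) | e.getD i 0 < e.getD (i + 1) 0}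

theorem descentCount_eq_card_ascents_lehmer (σ : Equiv.Perm (Fin n)) :
    descentCount σ = #(ascents (lehmer σ)) := by
  rw [descentCount, ← card_map Fin.valEmbedding]
  congr 1
  ext i
  simp only [mem_map, mem_filter, mem_univ, true_and, Fin.valEmbedding_apply, ascents, mem_range,
    length_lehmer]
  constructor
  · rintro ⟨a, ⟨j, hj, hdesc⟩, rfl⟩
    refine ⟨by omega, ?_⟩
    rw [getD_lehmer σ a.isLt, getD_lehmer σ (by omega)]
    simpa [← hj] using (lehmerEntry_lt_lehmerEntry_iff σ hj).2 hdesc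
  · rintro ⟨hi, hasc⟩
    refine ⟨⟨i, by omega⟩, ⟨⟨i + 1, by omega⟩, rfl, ?_⟩, rfl⟩
    rw [getD_lehmer σ (by omega), getD_lehmer σ (by omega)] at hasc
    exact (lehmerEntry_lt_lehmerEntry_iff σ rfl).1 hasc

theorem List.headI_eq_getD (l : List ℕ) : l.headI = l.getD 0 0 := by
  cases l <;> rfl

theorem List.getLastD_eq_getD {α : Type*} (l : List α) (d : α) :
    l.getLastD d = l.getD (l.length - 1) d := by
  rcases l.eq_nil_or_concat with rfl | ⟨L, b, rfl⟩ <;> simp [List.getD_eq_getElem?_getD]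

theorem mem_ascents_take {l : List ℕ} {m i : ℕ} :
    i ∈ ascents (l.take m) ↔ i ∈ ascents l ∧ i + 1 < m := by
  simp only [ascents, mem_filter, mem_range, List.length_take, List.getD_eq_getElem?_getD,
    List.getElem?_take]
  grind

theorem mem_ascents_drop {l : List ℕ} {m i : ℕ} : i ∈ ascents (l.drop m) ↔ m + i ∈ ascents l := by
  simp only [ascents, mem_filter, mem_range, List.length_drop, List.getD_eq_getElem?_getD,
    List.getElem?_drop]
  grind

theorem isChain_ge_iff_ascents_eq_empty (l : List ℕ) :
    l.IsChain (fun a b => b ≤ a) ↔ ascents l = ∅ := by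
  simp only [List.isChain_iff_getElem, eq_empty_iff_forall_notMem, ascents, mem_filter, mem_range,
    not_and, not_lt]
  refine forall_congr' fun i => ⟨fun h hi => ?_, fun h hi => ?_⟩
  · rw [List.getD_eq_getElem _ _ (by omega), List.getD_eq_getElem _ _ (by omega)]
    exact h (by omega)
  · have := h (by omega)
    rwa [List.getD_eq_getElem _ _ hi, List.getD_eq_getElem _ _ (by omega)] at this

theorem ascents_append_eq_singleton {t₁ t₂ : List ℕ} (h₁ : t₁.IsChain (fun a b => b ≤ a))
    (h₂ : t₂.IsChain (fun a b => b ≤ a)) (ht₁ : t₁ ≠ []) (hlt : t₁.getLastD 0 < t₂.headI) :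
    ascents (t₁ ++ t₂) = {t₁.length - 1} := by
  rw [isChain_ge_iff_ascents_eq_empty, eq_empty_iff_forall_notMem] at h₁ h₂
  have htake : (t₁ ++ t₂).take t₁.length = t₁ := List.take_left
  have hdrop : (t₁ ++ t₂).drop t₁.length = t₂ := List.drop_left
  ext i
  rw [mem_singleton]
  constructor
  · intro hi
    by_contra hne
    rcases lt_or_ge (i + 1) t₁.length with h | h
    · exact h₁ i (htake ▸ mem_ascents_take.2 ⟨hi, h⟩)
    · exact h₂ (i - t₁.length) (hdrop ▸ mem_ascents_drop.2 (by rwa [Nat.add_sub_of_le (by omega)]))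
  · rintro rfl
    have hpos₁ := List.length_pos_iff.2 ht₁
    have hpos₂ : 0 < t₂.length := List.length_pos_iff.2 (by rintro rfl; simp at hlt)
    rw [List.getLastD_eq_getD, List.headI_eq_getD] at hlt
    simp only [ascents, mem_filter, mem_range, List.length_append]
    refine ⟨by omega, ?_⟩
    rwa [List.getD_append _ _ _ _ (by omega), List.getD_append_right _ _ _ _ (by omega),
      Nat.sub_add_cancel hpos₁, Nat.sub_self]

theorem hasLayers_two_of_ascents_eq_singleton {e : List ℕ} {p : ℕ} (hp : ascents e = {p})
    (hel : e.headI ≤ e.getLastD 0) : HasLayers e 2 := by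
  have hpe : p ∈ ascents e := hp ▸ mem_singleton_self p
  have hchain₁ : (e.take (p + 1)).IsChain (fun a b => b ≤ a) := by
    rw [isChain_ge_iff_ascents_eq_empty, eq_empty_iff_forall_notMem]
    intro i hi
    obtain ⟨hie, hip⟩ := mem_ascents_take.1 hi
    rw [hp, mem_singleton] at hie
    omega
  have hchain₂ : (e.drop (p + 1)).IsChain (fun a b => b ≤ a) := by
    rw [isChain_ge_iff_ascents_eq_empty, eq_empty_iff_forall_notMem]
    intro i hi
    have := mem_ascents_drop.1 hi
    rw [hp, mem_singleton] at this
    omega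
  simp only [ascents, mem_filter, mem_range] at hpe
  refine ⟨[e.take (p + 1), e.drop (p + 1)], ⟨by simp, ?_, ?_⟩, rfl⟩
  · simp only [List.mem_cons, List.not_mem_nil, or_false]
    rintro t (rfl | rfl)
    · exact ⟨List.ne_nil_of_length_pos (by simp; omega), hchain₁⟩
    · exact ⟨List.ne_nil_of_length_pos (by simp; omega), hchain₂⟩
  · refine List.isChain_pair.2 ?_
    simp only [List.getLastD_eq_getD, List.headI_eq_getD] at hel ⊢
    simp only [List.getD_eq_getElem?_getD] at hel hpe ⊢
    grind

theorem hasLayers_two_iff (e : List ℕ) :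
    HasLayers e 2 ↔ #(ascents e) = 1 ∧ e.headI ≤ e.getLastD 0 := by
  rw [card_eq_one]
  refine ⟨?_, fun ⟨⟨p, hp⟩, hel⟩ => hasLayers_two_of_ascents_eq_singleton hp hel⟩
  rintro ⟨L, ⟨rfl, hL, hchain⟩, hlen⟩
  obtain ⟨t₁, t₂, rfl⟩ := List.length_eq_two.1 hlen
  rw [show [t₁, t₂].flatten = t₁ ++ t₂ by simp]
  obtain ⟨ht₁, hc₁⟩ := hL t₁ (by simp)
  obtain ⟨ht₂, hc₂⟩ := hL t₂ (by simp)
  replace hchain := List.isChain_pair.1 hchain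
  refine ⟨⟨_, ascents_append_eq_singleton hc₁ hc₂ ht₁ hchain.1⟩, ?_⟩
  have hpos₁ := List.length_pos_iff.2 ht₁
  have hpos₂ := List.length_pos_iff.2 ht₂
  have hle := hchain.2
  rw [List.headI_eq_getD, List.getLastD_eq_getD] at hle ⊢
  rwa [List.getD_append _ _ _ _ hpos₁, List.getD_append_right _ _ _ _ (by simp; omega),
    List.length_append, show t₁.length + t₂.length - 1 - t₁.length = t₂.length - 1 by omega]

theorem IsInvSeq.headI_eq_zero {e : List ℕ} (he : IsInvSeq e) : e.headI = 0 := by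
  cases e with
  | nil => rfl
  | cons a e => exact Nat.le_zero.1 (he 0 (by simp))

theorem IsInvSeq.hasLayers_two_iff {e : List ℕ} (he : IsInvSeq e) :
    HasLayers e 2 ↔ #(ascents e) = 1 := by
  simp [_root_.hasLayers_two_iff, he.headI_eq_zero]

/-- The Lehmer-code variant restricts to a bijection between the permutations of length n
with exactly one descent and the layered inversion sequences of length n with exactly
2 layers. -/
theorem lehmer_bijOn_one_descent (n : ℕ) :
    Set.BijOn lehmer {σ : Equiv.Perm (Fin n) | descentCount σ = 1}
      {e : List ℕ | e.length = n ∧ IsInvSeq e ∧ HasLayers e 2} := by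
  have hlayers (σ : Equiv.Perm (Fin n)) : HasLayers (lehmer σ) 2 ↔ descentCount σ = 1 := by
    rw [(isInvSeq_lehmer σ).hasLayers_two_iff, descentCount_eq_card_ascents_lehmer]
  refine ⟨fun σ hσ => ⟨length_lehmer σ, isInvSeq_lehmer σ, (hlayers σ).2 hσ⟩,
    lehmer_injective.injOn, ?_⟩
  rintro e ⟨hlen, hinv, hlay⟩
  obtain ⟨σ, rfl⟩ : e ∈ Set.range (lehmer (n := n)) := by
    rw [range_lehmer]
    exact ⟨hlen, hinv⟩
  exact ⟨σ, (hlayers σ).1 hlay, rfl⟩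
end

section
/- For n ≥ 1, the number of pop stack sortable inversion sequences of length n with exactly n-1 layers is binomial(n+1, 3). -/
/-!
A word of length `n` with `n - 1` layers has exactly one layer `[a, b]` of length two, so it reads
`u ++ a :: b :: v` with `u` and `v` strictly increasing, `u < a`, `u ≤ b ≤ a`, `b < v` and
`a ≤ v`. In an inversion sequence this forces `u = [0, …, m - 1]`, `a = m` and `b ∈ {m, m - 1}`;
as `v_i ≤ m + 2 + i`, the defect `m + 2 + i - v_i` along `v` is nonincreasing and starts at most
at `1` if `b = m`, at `2` if `b = m - 1`. So the sequence is the identity `0, 1, …, n - 1` with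
the entries in `(x, y]` lowered by one (`x < y < n`), or with those in `(x + 1, y + 1]` lowered
by two and those in `(y + 1, z]` by one (`x < y < z < n`). Distinct parameters give distinct
sequences, whence `C(n, 2) + C(n, 3) = C(n + 1, 3)`.
-/

open List

def IsInvSeqFrom (s : ℕ) (v : List ℕ) : Prop := ∀ i < v.length, v.getD i 0 ≤ s + i

theorem isInvSeq_iff_isInvSeqFrom_zero {e : List ℕ} : IsInvSeq e ↔ IsInvSeqFrom 0 e := by
  simp [IsInvSeq, IsInvSeqFrom]

theorem isInvSeqFrom_cons {s x : ℕ} {v : List ℕ} :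
    IsInvSeqFrom s (x :: v) ↔ x ≤ s ∧ IsInvSeqFrom (s + 1) v := by
  constructor
  · intro h
    refine ⟨by simpa using h 0 (by simp), fun i hi => ?_⟩
    simpa [add_right_comm s 1 i, add_assoc] using h (i + 1) (by simpa using hi)
  · rintro ⟨hx, hv⟩ (_ | i) hi
    · simpa using hx
    · simpa [add_right_comm s 1 i, add_assoc] using hv i (by simpa using hi)

theorem isInvSeqFrom_append {s : ℕ} {u v : List ℕ} :
    IsInvSeqFrom s (u ++ v) ↔ IsInvSeqFrom s u ∧ IsInvSeqFrom (s + u.length) v := by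
  induction u generalizing s with
  | nil => simp [IsInvSeqFrom]
  | cons x u ih => simp [isInvSeqFrom_cons, ih, and_assoc, add_assoc, add_comm 1]

namespace IsInvSeqFrom

-- For strictly increasing `v`, `v_i - i` is nondecreasing; here it is confined to `[s, s + k]`,
-- so `v` consists of at most `k + 1` runs of consecutive integers.
theorem eq_range' : ∀ {s : ℕ} {v : List ℕ}, IsInvSeqFrom s v → IsChain (· < ·) v →
    (∀ y ∈ v.head?, s ≤ y) → v = range' s v.length
  | _, [], _, _, _ => rfl
  | s, x :: v, hb, hc, hh => by
    rw [isInvSeqFrom_cons] at hb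
    rw [isChain_cons] at hc
    obtain rfl : x = s := le_antisymm hb.1 (hh x rfl)
    rw [length_cons, range'_succ, ← eq_range' hb.2 hc.2 hc.1]

theorem exists_eq_range'_append_range' : ∀ {s : ℕ} {v : List ℕ}, IsInvSeqFrom (s + 1) v →
    IsChain (· < ·) v → (∀ y ∈ v.head?, s ≤ y) →
    ∃ t r, v = range' s t ++ range' (s + t + 1) r
  | _, [], _, _, _ => ⟨0, 0, rfl⟩
  | s, x :: v, hb, hc, hh => by
    rw [isInvSeqFrom_cons] at hb
    rw [isChain_cons] at hc
    obtain rfl | rfl : x = s ∨ x = s + 1 := by have := hh x rfl; omega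
    · obtain ⟨t, r, rfl⟩ := exists_eq_range'_append_range' hb.2 hc.2 hc.1
      exact ⟨t + 1, r, by rw [show x + (t + 1) = x + 1 + t by omega]; rfl⟩
    · exact ⟨0, v.length + 1, by rw [range'_succ, ← eq_range' hb.2 hc.2 hc.1]; simp⟩

theorem exists_eq_range'_append_range'_append_range' : ∀ {s : ℕ} {v : List ℕ},
    IsInvSeqFrom (s + 2) v → IsChain (· < ·) v → (∀ y ∈ v.head?, s ≤ y) →
    ∃ t q r, v = range' s t ++ range' (s + t + 1) q ++ range' (s + t + q + 2) r
  | _, [], _, _, _ => ⟨0, 0, 0, rfl⟩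
  | s, x :: v, hb, hc, hh => by
    rw [isInvSeqFrom_cons] at hb
    rw [isChain_cons] at hc
    obtain rfl | rfl | rfl : x = s ∨ x = s + 1 ∨ x = s + 2 := by have := hh x rfl; omega
    · obtain ⟨t, q, r, rfl⟩ := exists_eq_range'_append_range'_append_range' hb.2 hc.2 hc.1
      exact ⟨t + 1, q, r, by rw [show x + (t + 1) = x + 1 + t by omega]; rfl⟩
    · obtain ⟨q, r, rfl⟩ := exists_eq_range'_append_range' hb.2 hc.2 hc.1
      exact ⟨0, q + 1, r, by rw [show s + 0 + (q + 1) + 2 = s + 2 + q + 1 by omega]; rfl⟩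
    · exact ⟨0, 0, v.length + 1, by rw [range'_succ, ← eq_range' hb.2 hc.2 hc.1]; simp⟩

end IsInvSeqFrom

theorem length_le_length_flatten {L : List (List ℕ)} (hL : ∀ t ∈ L, t ≠ []) :
    L.length ≤ L.flatten.length := by
  simpa using length_le_sum_of_one_le (L.map length) (by simpa [Nat.one_le_iff_ne_zero] using hL)

theorem eq_map_singleton_of_length_flatten {L : List (List ℕ)} (hL : ∀ t ∈ L, t ≠ [])
    (h : L.flatten.length = L.length) : L = L.flatten.map ([·]) := by
  induction L with
  | nil => rfl
  | cons t L ih =>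
    have hL' : ∀ s ∈ L, s ≠ [] := fun s hs => hL s (mem_cons_of_mem t hs)
    have := length_le_length_flatten hL'
    have := length_pos_iff.2 (hL t mem_cons_self)
    simp only [flatten_cons, length_append, length_cons] at h
    obtain ⟨x, rfl⟩ := length_eq_one_iff.1 (by omega : t.length = 1)
    simp only [flatten_cons, singleton_append, map_cons]
    exact congrArg _ (ih hL' (by simp only [length_cons] at h; omega))

theorem exists_eq_map_singleton_append {L : List (List ℕ)} (hL : ∀ t ∈ L, t ≠ [])
    (h : L.flatten.length = L.length + 1) :
    ∃ (u : List ℕ) (a b : ℕ) (v : List ℕ), L = u.map ([·]) ++ [a, b] :: v.map ([·]) := by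
  induction L with
  | nil => simp at h
  | cons t L ih =>
    have hL' : ∀ s ∈ L, s ≠ [] := fun s hs => hL s (mem_cons_of_mem t hs)
    have := length_le_length_flatten hL'
    have := length_pos_iff.2 (hL t mem_cons_self)
    simp only [flatten_cons, length_append, length_cons] at h
    obtain ht | ht : t.length = 1 ∨ t.length = 2 := by omega
    · obtain ⟨x, rfl⟩ := length_eq_one_iff.1 ht
      obtain ⟨u, a, b, v, rfl⟩ := ih hL' (by omega)
      exact ⟨x :: u, a, b, v, rfl⟩
    · obtain ⟨a, b, rfl⟩ := length_eq_two.1 ht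
      have hL1 := eq_map_singleton_of_length_flatten hL' (by omega)
      exact ⟨[], a, b, L.flatten, by simpa using hL1⟩

/-- `u ++ a :: b :: v` is layered, its layers being `[a, b]` and the singletons of `u` and `v`. -/
def IsLayeredAround (u : List ℕ) (a b : ℕ) (v : List ℕ) : Prop :=
  IsChain (· < ·) u ∧ (∀ c ∈ u.getLast?, c < a ∧ c ≤ b) ∧ b ≤ a ∧
    (∀ c ∈ v.head?, b < c ∧ a ≤ c) ∧ IsChain (· < ·) v

theorem isLayeredDecomp_iff_isLayeredAround {u v : List ℕ} {a b : ℕ} :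
    IsLayeredDecomp (u ++ a :: b :: v) (u.map ([·]) ++ [a, b] :: v.map ([·])) ↔
      IsLayeredAround u a b v := by
  simp [IsLayeredDecomp, IsLayeredAround, List.Chain', ← flatMap_def, isChain_append,
    isChain_cons, isChain_map, and_iff_left_of_imp Nat.le_of_lt, or_imp, forall_and]
  tauto

theorem hasLayers_iff_isLayeredAround {w : List ℕ} {k : ℕ} (hw : w.length = k + 1) :
    HasLayers w k ↔ ∃ u a b v, w = u ++ a :: b :: v ∧ IsLayeredAround u a b v := by
  constructor
  · rintro ⟨L, hL, rfl⟩
    obtain ⟨u, a, b, v, rfl⟩ :=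
      exists_eq_map_singleton_append (fun t ht => (hL.2.1 t ht).1) (hL.1 ▸ hw)
    obtain rfl : w = u ++ a :: b :: v := by simpa [← flatMap_def] using hL.1
    exact ⟨u, a, b, v, rfl, isLayeredDecomp_iff_isLayeredAround.1 hL⟩
  · rintro ⟨u, a, b, v, rfl, h⟩
    exact ⟨_, isLayeredDecomp_iff_isLayeredAround.2 h, by simp at hw ⊢; omega⟩

theorem range'_append_range' {s m s' k : ℕ} (h : s + m = s') :
    range' s m ++ range' s' k = range' s (m + k) := h ▸ range'_append_1

theorem map_range'_eq_range'_sub {f : ℕ → ℕ} {a s k : ℕ} (ha : a ≤ s)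
    (hf : ∀ i, s ≤ i → i < s + k → f i = i - a) :
    (range' s k).map f = range' (s - a) k := by
  rw [← map_sub_range' ha]
  exact map_congr_left fun i hi => hf i (mem_range'_1.1 hi).1 (mem_range'_1.1 hi).2

-- The two kinds of inversion sequences with `n - 1` layers: the layer of length two is `[x, x]`
-- in `flatSeq n x y` and `[x + 1, x]` in `dropSeq n x y z`.
def flatSeq (n x y : ℕ) : List ℕ :=
  (range n).map fun i => if x < i ∧ i ≤ y then i - 1 else i

def dropSeq (n x y z : ℕ) : List ℕ :=
  (range n).map fun i =>
    if x + 1 < i ∧ i ≤ y + 1 then i - 2 else if y + 1 < i ∧ i ≤ z then i - 1 else i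

theorem flatSeq_eq (x t r : ℕ) :
    flatSeq (x + t + r + 2) x (x + t + 1) =
      range x ++ x :: x :: (range' (x + 1) t ++ range' (x + t + 2) r) := by
  have hsplit : range (x + t + r + 2) =
      range' 0 (x + 1) ++ range' (x + 1) (t + 1) ++ range' (x + t + 2) r := by
    rw [range'_append_range' (zero_add _),
      range'_append_range' (by omega : 0 + (x + 1 + (t + 1)) = x + t + 2), range_eq_range']
    congr 1; omega
  rw [flatSeq, hsplit, map_append, map_append,
    map_range'_eq_range'_sub (a := 0) (Nat.zero_le _), map_range'_eq_range'_sub (a := 1) (by omega),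
    map_range'_eq_range'_sub (a := 0) (Nat.zero_le _)]
  · rw [← range_eq_range', range_succ, Nat.add_sub_cancel, Nat.sub_zero]
    simp [range'_succ]
  all_goals intro i hi1 hi2; split_ifs <;> omega

theorem dropSeq_eq (x t q r : ℕ) :
    dropSeq (x + t + q + r + 3) x (x + t + 1) (x + t + q + 2) =
      range (x + 1) ++ (x + 1) :: x ::
        (range' (x + 1) t ++ range' (x + t + 2) q ++ range' (x + t + q + 3) r) := by
  have hsplit : range (x + t + q + r + 3) = range' 0 (x + 2) ++ range' (x + 2) (t + 1) ++
      range' (x + t + 3) q ++ range' (x + t + q + 3) r := by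
    rw [range'_append_range' (zero_add _),
      range'_append_range' (by omega : 0 + (x + 2 + (t + 1)) = x + t + 3),
      range'_append_range' (by omega : 0 + (x + 2 + (t + 1) + q) = x + t + q + 3),
      range_eq_range']
    congr 1; omega
  rw [dropSeq, hsplit, map_append, map_append, map_append,
    map_range'_eq_range'_sub (a := 0) (Nat.zero_le _), map_range'_eq_range'_sub (a := 2) (by omega),
    map_range'_eq_range'_sub (a := 1) (by omega),
    map_range'_eq_range'_sub (a := 0) (Nat.zero_le _)]
  · rw [← range_eq_range', range_succ, Nat.add_sub_cancel, Nat.sub_zero,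
      show x + t + 3 - 1 = x + t + 2 by omega]
    simp [range'_succ]
  all_goals intro i hi1 hi2; split_ifs <;> omega

theorem exists_flatSeq_or_dropSeq_eq {n : ℕ} {e : List ℕ} (hn : 1 ≤ n) (hlen : e.length = n)
    (hinv : IsInvSeq e) (hlay : HasLayers e (n - 1)) :
    (∃ x y, x < y ∧ y < n ∧ flatSeq n x y = e) ∨
      ∃ x y z, x < y ∧ y < z ∧ z < n ∧ dropSeq n x y z = e := by
  obtain ⟨u, a, b, v, rfl, hu, hua, hba, hav, hv⟩ :=
    (hasLayers_iff_isLayeredAround (by omega)).1 hlay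
  rw [isInvSeq_iff_isInvSeqFrom_zero, isInvSeqFrom_append, isInvSeqFrom_cons, isInvSeqFrom_cons,
    zero_add] at hinv
  obtain ⟨hu0, ha, hb, hv0⟩ := hinv
  obtain ⟨m, rfl⟩ : ∃ m, u = range m :=
    ⟨u.length, by rw [range_eq_range']; exact hu0.eq_range' hu fun _ _ => Nat.zero_le _⟩
  simp only [length_range] at ha hb hv0
  have hab : a = m ∧ (b = m ∨ b + 1 = m) := by
    rcases Nat.eq_zero_or_pos m with rfl | hm
    · omega
    · have := hua (m - 1) (by simp [getLast?_range]; omega)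
      omega
  obtain ⟨rfl, rfl | rfl⟩ := hab
  · obtain ⟨t, r, rfl⟩ := hv0.exists_eq_range'_append_range' hv fun c hc => (hav c hc).1
    obtain rfl : n = b + t + r + 2 := by rw [← hlen]; simp; omega
    refine Or.inl ⟨b, b + t + 1, by omega, by omega, ?_⟩
    rw [flatSeq_eq, show b + t + 2 = b + 1 + t + 1 by omega]
  · obtain ⟨t, q, r, rfl⟩ :=
      hv0.exists_eq_range'_append_range'_append_range' hv fun c hc => (hav c hc).2
    obtain rfl : n = b + t + q + r + 3 := by rw [← hlen]; simp; omega
    refine Or.inr ⟨b, b + t + 1, b + t + q + 2, by omega, by omega, by omega, ?_⟩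
    rw [dropSeq_eq, show b + t + 2 = b + 1 + t + 1 by omega,
      show b + t + q + 3 = b + 1 + t + q + 2 by omega]

theorem isInvSeq_map_range {n : ℕ} {f : ℕ → ℕ} (hf : ∀ i < n, f i ≤ i) :
    IsInvSeq ((range n).map f) := by
  intro i hi
  rw [length_map, length_range] at hi
  simp [getD_eq_getElem?_getD, hi, hf i hi]

theorem isInvSeq_flatSeq (n x y : ℕ) : IsInvSeq (flatSeq n x y) :=
  isInvSeq_map_range fun i _ => by split_ifs <;> omega

theorem isInvSeq_dropSeq (n x y z : ℕ) : IsInvSeq (dropSeq n x y z) :=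
  isInvSeq_map_range fun i _ => by split_ifs <;> omega

theorem hasLayers_flatSeq {n x y : ℕ} (hxy : x < y) (hyn : y < n) :
    HasLayers (flatSeq n x y) (n - 1) := by
  obtain ⟨t, rfl⟩ := Nat.exists_eq_add_of_lt hxy
  obtain ⟨r, rfl⟩ := Nat.exists_eq_add_of_lt hyn
  rw [show x + t + 1 + r + 1 = x + t + r + 2 by omega, flatSeq_eq,
    hasLayers_iff_isLayeredAround (by simp; omega)]
  refine ⟨_, _, _, _, rfl, pairwise_lt_range.isChain, fun c hc => ?_, le_rfl, fun c hc => ?_,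
    ?_⟩
  · simp [getLast?_range] at hc; omega
  · have := mem_of_mem_head? hc; simp at this; omega
  · apply Pairwise.isChain; simp [pairwise_append, pairwise_lt_range']
    omega

theorem hasLayers_dropSeq {n x y z : ℕ} (hxy : x < y) (hyz : y < z) (hzn : z < n) :
    HasLayers (dropSeq n x y z) (n - 1) := by
  obtain ⟨t, rfl⟩ := Nat.exists_eq_add_of_lt hxy
  obtain ⟨q, rfl⟩ := Nat.exists_eq_add_of_lt hyz
  obtain ⟨r, rfl⟩ := Nat.exists_eq_add_of_lt hzn
  rw [show x + t + 1 + q + 1 + r + 1 = x + t + q + r + 3 by omega,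
    show x + t + 1 + q + 1 = x + t + q + 2 by omega, dropSeq_eq,
    hasLayers_iff_isLayeredAround (by simp; omega)]
  refine ⟨_, _, _, _, rfl, pairwise_lt_range.isChain, fun c hc => ?_, by omega, fun c hc => ?_,
    ?_⟩
  · simp [getLast?_range] at hc; omega
  · have := mem_of_mem_head? hc; simp at this; omega
  · apply Pairwise.isChain; simp [pairwise_append, pairwise_lt_range']
    exact ⟨by omega, by omega⟩

theorem sum_range_choose_eq_choose_succ (n k : ℕ) :
    ∑ i ∈ Finset.range n, i.choose k = n.choose (k + 1) := by
  induction n with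
  | zero => simp
  | succ n ih => rw [Finset.sum_range_succ, ih, Nat.choose_succ_succ', add_comm]

def pairsBelow (n : ℕ) : Finset (ℕ × ℕ) :=
  {p ∈ Finset.range n ×ˢ Finset.range n | p.1 < p.2}

/-- The triples `x < y < z < n`, encoded as `⟨z, (x, y)⟩`. -/
def triplesBelow (n : ℕ) : Finset (Σ _ : ℕ, ℕ × ℕ) := (Finset.range n).sigma pairsBelow

theorem mem_pairsBelow {n : ℕ} {p : ℕ × ℕ} :
    p ∈ pairsBelow n ↔ p.1 < p.2 ∧ p.2 < n := by
  simp only [pairsBelow, Finset.mem_filter, Finset.mem_product, Finset.mem_range]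
  omega

theorem mem_triplesBelow {n : ℕ} {p : Σ _ : ℕ, ℕ × ℕ} :
    p ∈ triplesBelow n ↔ p.2.1 < p.2.2 ∧ p.2.2 < p.1 ∧ p.1 < n := by
  rw [triplesBelow, Finset.mem_sigma, mem_pairsBelow, Finset.mem_range]
  tauto

theorem card_pairsBelow (n : ℕ) : (pairsBelow n).card = n.choose 2 := by
  rw [pairsBelow, Finset.card_product_filter_lt, Finset.card_range]

theorem card_triplesBelow (n : ℕ) : (triplesBelow n).card = n.choose 3 := by
  simp only [triplesBelow, Finset.card_sigma, card_pairsBelow]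
  exact sum_range_choose_eq_choose_succ n 2

def flatSeqs (n : ℕ) : Finset (List ℕ) := (pairsBelow n).image fun p => flatSeq n p.1 p.2

def dropSeqs (n : ℕ) : Finset (List ℕ) :=
  (triplesBelow n).image fun p => dropSeq n p.2.1 p.2.2 p.1

theorem mem_flatSeqs {n : ℕ} {e : List ℕ} :
    e ∈ flatSeqs n ↔ ∃ x y, x < y ∧ y < n ∧ flatSeq n x y = e := by
  simp [flatSeqs, mem_pairsBelow, and_assoc]

theorem mem_dropSeqs {n : ℕ} {e : List ℕ} :
    e ∈ dropSeqs n ↔ ∃ x y z, x < y ∧ y < z ∧ z < n ∧ dropSeq n x y z = e := by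
  simp only [dropSeqs, Finset.mem_image, Sigma.exists, Prod.exists, mem_triplesBelow]
  constructor
  · rintro ⟨z, x, y, ⟨hxy, hyz, hzn⟩, he⟩
    exact ⟨x, y, z, hxy, hyz, hzn, he⟩
  · rintro ⟨x, y, z, hxy, hyz, hzn, he⟩
    exact ⟨z, x, y, ⟨hxy, hyz, hzn⟩, he⟩

-- Unless the parameters agree, one of the probed positions is lowered by different amounts in
-- the two sequences.
theorem card_flatSeqs (n : ℕ) : (flatSeqs n).card = n.choose 2 := by
  rw [flatSeqs, Finset.card_image_of_injOn, card_pairsBelow]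
  rintro ⟨x, y⟩ hp ⟨x', y'⟩ hp' he
  rw [Finset.mem_coe, mem_pairsBelow] at hp hp'
  dsimp only at hp hp' he
  have key := fun i (hi : i < n) => map_inj_left.1 he i (mem_range.2 hi)
  have h₁ := key (min x x' + 1) (by omega)
  have h₂ := key (max y y') (by omega)
  simp only [Prod.mk.injEq]
  split_ifs at h₁ h₂ <;> omega

theorem card_dropSeqs (n : ℕ) : (dropSeqs n).card = n.choose 3 := by
  rw [dropSeqs, Finset.card_image_of_injOn, card_triplesBelow]
  rintro ⟨z, x, y⟩ hp ⟨z', x', y'⟩ hp' he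
  rw [Finset.mem_coe, mem_triplesBelow] at hp hp'
  dsimp only at hp hp' he
  have key := fun i (hi : i < n) => map_inj_left.1 he i (mem_range.2 hi)
  obtain rfl : x = x' := by
    have h := key (min x x' + 2) (by omega)
    split_ifs at h <;> omega
  obtain rfl : y = y' := by
    have h := key (max y y' + 1) (by omega)
    split_ifs at h <;> omega
  obtain rfl : z = z' := by
    have h := key (max z z') (by omega)
    split_ifs at h <;> omega
  rfl

theorem disjoint_flatSeqs_dropSeqs (n : ℕ) : Disjoint (flatSeqs n) (dropSeqs n) := by
  rw [Finset.disjoint_left]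
  intro e he he'
  obtain ⟨x, y, hxy, hyn, rfl⟩ := mem_flatSeqs.1 he
  obtain ⟨x', y', z', hxy', -, -, he'⟩ := mem_dropSeqs.1 he'
  have h := map_inj_left.1 he' (min (x + 1) (x' + 2)) (mem_range.2 (by omega))
  split_ifs at h <;> omega

theorem setOf_isInvSeq_hasLayers_eq {n : ℕ} (hn : 1 ≤ n) :
    {e : List ℕ | e.length = n ∧ IsInvSeq e ∧ HasLayers e (n - 1)} =
      ↑(flatSeqs n ∪ dropSeqs n) := by
  ext e
  rw [Set.mem_ofPred_eq, Finset.coe_union, Set.mem_union, Finset.mem_coe, Finset.mem_coe,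
    mem_flatSeqs, mem_dropSeqs]
  constructor
  · rintro ⟨hlen, hinv, hlay⟩
    exact exists_flatSeq_or_dropSeq_eq hn hlen hinv hlay
  · rintro (⟨x, y, hxy, hyn, rfl⟩ | ⟨x, y, z, hxy, hyz, hzn, rfl⟩)
    · exact ⟨by simp [flatSeq], isInvSeq_flatSeq n x y, hasLayers_flatSeq hxy hyn⟩
    · exact ⟨by simp [dropSeq], isInvSeq_dropSeq n x y z, hasLayers_dropSeq hxy hyz hzn⟩

/-- For n ≥ 1, the number of pop stack sortable (i.e. layered) inversion sequences of
length n with exactly n-1 layers is binomial(n+1,3). -/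
theorem layers_n_sub_one_count (n : ℕ) (hn : 1 ≤ n) :
    Set.ncard {e : List ℕ | e.length = n ∧ IsInvSeq e ∧ HasLayers e (n - 1)} =
      (n + 1).choose 3 := by
  rw [setOf_isInvSeq_hasLayers_eq hn, Set.ncard_coe_finset,
    Finset.card_union_of_disjoint (disjoint_flatSeqs_dropSeqs n), card_flatSeqs, card_dropSeqs,
    Nat.choose_succ_succ']
end

section
/- For positive integers n, k, a with k < n, the number of weakly decreasing words of length n with first value a, entries that are nonnegative integers, and at most k strict descents equals 1 + sum over j from 1 to k of binomial(n-1, j) * binomial(a, j). -/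
/-!
Let `N(n, a, j)` be the number of weakly decreasing words of length `n + 1` with first letter `a`
and exactly `j` strict descents. Removing the first letter leaves a word starting either with `a`
(same number of descents) or with some `b < a` (one descent fewer), so
`N(n + 1, a, j + 1) = N(n, a, j + 1) + ∑_{b < a} N(n, b, j)`. The hockey-stick identity and
Pascal's rule then show `N(n, a, j) = C(n, j) C(a, j)`; summing over `j ≤ k` gives the count, the
term `j = 0` being the constant word.
-/

open Finset

theorem Nat.sum_range_choose_eq_choose_succ (a j : ℕ) :
    ∑ b ∈ range a, b.choose j = a.choose (j + 1) := by
  induction a with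
  | zero => simp
  | succ a ih => rw [sum_range_succ, ih, Nat.choose_succ_succ', add_comm]

theorem Finset.card_filter_le_eq_sum_card_filter_eq {α : Type*} (s : Finset α) (f : α → ℕ)
    (k : ℕ) : #{x ∈ s | f x ≤ k} = ∑ j ∈ range (k + 1), #{x ∈ s | f x = j} := by
  rw [card_eq_sum_card_fiberwise (f := f) (t := range (k + 1))]
  · refine sum_congr rfl fun j hj => ?_
    rw [filter_filter]
    exact congrArg card (filter_congr fun x _ => by grind)
  · exact fun x hx => mem_range.2 (Nat.lt_succ_of_le (mem_filter.1 hx).2)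

namespace WeaklyDecreasingWords

def descents (w : List ℕ) : ℕ :=
  ((List.range (w.length - 1)).filter fun i => w.getD (i + 1) 0 < w.getD i 0).length

theorem descents_cons_cons (x y : ℕ) (t : List ℕ) :
    descents (x :: y :: t) = descents (y :: t) + if y < x then 1 else 0 := by
  simp only [descents, List.length_cons, Nat.add_sub_cancel, List.range_succ_eq_map,
    List.filter_cons, List.filter_map, Function.comp_def, List.getD_cons_succ,
    List.getD_cons_zero, decide_eq_true_eq]
  split_ifs <;> simp

@[simp]
theorem descents_singleton (x : ℕ) : descents [x] = 0 := rfl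

/-- The weakly decreasing words of length `n + 1` with first letter `a`. -/
def words : ℕ → ℕ → Finset (List ℕ)
  | 0, a => {[a]}
  | n + 1, a => (range (a + 1)).biUnion fun b => (words n b).map ⟨List.cons a, List.cons_injective⟩

theorem mem_words {n a : ℕ} {w : List ℕ} :
    w ∈ words n a ↔ w.length = n + 1 ∧ w.headI = a ∧ w.IsChain (fun x y => y ≤ x) := by
  induction n generalizing a w with
  | zero =>
    match w with
    | [] => simp [words]
    | [x] => simp [words, eq_comm]
    | _ :: _ :: _ => simp [words]
  | succ n ih =>
    match w with
    | [] | [_] => simp [words, ih]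
    | x :: y :: t =>
      simp only [words, mem_biUnion, mem_map, mem_range, Function.Embedding.coeFn_mk,
        List.cons.injEq, ih, List.isChain_cons_cons, List.length_cons, List.headI_cons]
      constructor
      · rintro ⟨b, hb, _, ⟨hlen, hy, hchain⟩, rfl, rfl⟩
        obtain rfl : y = b := hy
        exact ⟨by simpa using hlen, rfl, by omega, hchain⟩
      · rintro ⟨hlen, rfl, hyx, hchain⟩
        exact ⟨y, by omega, _, ⟨by simpa using hlen, rfl, hchain⟩, rfl, rfl⟩

theorem disjoint_words {n b b' : ℕ} (h : b ≠ b') : Disjoint (words n b) (words n b') :=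
  disjoint_left.2 fun _ hb hb' => h ((mem_words.1 hb).2.1.symm.trans (mem_words.1 hb').2.1)

theorem descents_cons_of_mem_words {n a b : ℕ} {v : List ℕ} (hv : v ∈ words n b) :
    descents (a :: v) = descents v + if b < a then 1 else 0 := by
  obtain ⟨hlen, rfl, -⟩ := mem_words.1 hv
  match v, hlen with
  | y :: t, _ => exact descents_cons_cons a y t

theorem card_filter_descents_words_succ (n a j : ℕ) :
    #{w ∈ words (n + 1) a | descents w = j} =
      ∑ b ∈ range a, #{v ∈ words n b | descents v + 1 = j} +
        #{v ∈ words n a | descents v = j} := by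
  rw [words, filter_biUnion, card_biUnion fun b _ b' _ h =>
    disjoint_filter_filter ((disjoint_map _).2 (disjoint_words h)), sum_range_succ]
  simp only [filter_map, card_map]
  congr 1
  · refine sum_congr rfl fun b hb => congrArg card (filter_congr fun v hv => ?_)
    simp [descents_cons_of_mem_words hv, mem_range.1 hb]
  · exact congrArg card (filter_congr fun v hv => by simp [descents_cons_of_mem_words hv])

theorem card_filter_descents_words (n a j : ℕ) :
    #{w ∈ words n a | descents w = j} = n.choose j * a.choose j := by
  induction n generalizing a j with
  | zero => cases j <;> simp [words, filter_singleton]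
  | succ n ih =>
    rw [card_filter_descents_words_succ, ih]
    cases j with
    | zero => simp
    | succ j =>
      simp only [Nat.add_right_cancel_iff, ih]
      rw [← mul_sum, Nat.sum_range_choose_eq_choose_succ, Nat.choose_succ_succ', add_mul]

end WeaklyDecreasingWords

open WeaklyDecreasingWords in
theorem weakly_decreasing_words_count_general (n k a : ℕ) (hn : 0 < n) :
    Set.ncard {w : List ℕ | w.length = n ∧ w.headI = a ∧
        List.Chain' (fun x y => y ≤ x) w ∧
        (((List.range (n - 1)).filter fun i => w.getD (i + 1) 0 < w.getD i 0)).length ≤ k} =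
      1 + ∑ j ∈ Finset.Icc 1 k, (n - 1).choose j * a.choose j := by
  obtain ⟨m, rfl⟩ := Nat.exists_eq_add_one_of_ne_zero hn.ne'
  calc _ = #{w ∈ words m a | descents w ≤ k} := by
        rw [← Set.ncard_coe_finset]
        congr 1
        ext w
        rw [Set.mem_ofPred_eq, mem_coe, mem_filter, mem_words]
        constructor
        · rintro ⟨hlen, hhead, hchain, hk⟩
          exact ⟨⟨hlen, hhead, hchain⟩, by rwa [descents, hlen]⟩
        · rintro ⟨⟨hlen, hhead, hchain⟩, hk⟩
          exact ⟨hlen, hhead, hchain, by rwa [descents, hlen] at hk⟩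
    _ = _ := by
      rw [card_filter_le_eq_sum_card_filter_eq, range_eq_Ico,
        sum_eq_sum_Ico_succ_bot (by omega : 0 < k + 1), zero_add, Ico_add_one_right_eq_Icc]
      simp only [card_filter_descents_words, Nat.add_sub_cancel, Nat.choose_zero_right, mul_one]

/-- For positive integers n, k, a with k < n, the number of weakly decreasing words of
length n of nonnegative integers with first value a and at most k strict descents is
1 + ∑_{j=1}^{k} C(n-1,j)·C(a,j). -/
theorem weakly_decreasing_words_count (n k a : ℕ) (hn : 0 < n) (hk : 0 < k) (ha : 0 < a)
    (hkn : k < n) :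
    Set.ncard {w : List ℕ | w.length = n ∧ w.headI = a ∧
        List.Chain' (fun x y => y ≤ x) w ∧
        (((List.range (n - 1)).filter fun i => w.getD (i + 1) 0 < w.getD i 0)).length ≤ k} =
      1 + ∑ j ∈ Finset.Icc 1 k, (n - 1).choose j * a.choose j :=
  weakly_decreasing_words_count_general n k a hn
end

section
/- A word w over the nonnegative integers is sortable by a (2,1)-pop stack of depth two if and only if w avoids the patterns 120, 201, and 210. -/
/-- One step of a (2,1)-pop stack of depth two, acting on states (input, stack, output):
one may push the next input letter either on top of the stack or just below the topmost
run of equal values (the second "value position"), provided the stack holds at most two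
distinct values; or pop the entire stack to the output. -/
inductive PS21Step : List ℕ × List ℕ × List ℕ → List ℕ × List ℕ × List ℕ → Prop
  | pushTop (x : ℕ) (xs st out : List ℕ) :
      (x :: st).dedup.length ≤ 2 →
      PS21Step (x :: xs, st, out) (xs, x :: st, out)
  | pushSecond (x : ℕ) (xs st out : List ℕ) :
      st ≠ [] → (x :: st).dedup.length ≤ 2 →
      PS21Step (x :: xs, st, out)
        (xs, (st.takeWhile fun y => y = st.headI) ++ x :: (st.dropWhile fun y => y = st.headI),
          out)
  | pop (xs st out : List ℕ) : st ≠ [] → PS21Step (xs, st, out) (xs, [], out ++ st)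

/-- w is sortable by a (2,1)-pop stack of depth two: some sequence of legal operations
consumes the input and produces a weakly increasing output. -/
def PS21Sortable (w : List ℕ) : Prop :=
  ∃ out : List ℕ, Relation.ReflTransGen PS21Step (w, [], []) ([], [], out) ∧
    List.Pairwise (· ≤ ·) out

/-!
Both conditions are equivalent to `w` splitting into consecutive blocks, each taking at most two
values, such that every entry of a block is at most every entry of the later blocks.

A pop empties the stack and the stack never holds three values, so the letters pushed between two
pops of a sorting run form such a block. Conversely, a block on values `u < v` comes out sorted if
each `u` is pushed on top and each `v` below the run of `u`'s.

For the patterns, the first block of `a :: t` runs up to the last letter `c < a` of `t`: everything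
after it is at least `a`, and avoidance forces every letter in between to be `a` or `c`.
-/

variable {α : Type*}

theorem List.exists_eq_append_cons_forall_not {p : α → Prop} :
    ∀ {l : List α}, (∃ x ∈ l, p x) → ∃ l₁ a l₂, l = l₁ ++ a :: l₂ ∧ p a ∧ ∀ x ∈ l₂, ¬ p x
  | [], ⟨_, hx, _⟩ => absurd hx List.not_mem_nil
  | x :: l, hex => by
    by_cases hl : ∃ y ∈ l, p y
    · obtain ⟨l₁, a, l₂, rfl, ha, hl₂⟩ := exists_eq_append_cons_forall_not hl
      exact ⟨x :: l₁, a, l₂, rfl, ha, hl₂⟩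
    · push Not at hl
      refine ⟨[], x, l, rfl, ?_, hl⟩
      obtain ⟨y, hy, hpy⟩ := hex
      obtain rfl | hy := List.mem_cons.1 hy
      exacts [hpy, absurd hpy (hl y hy)]

theorem List.takeWhile_append_cons_dropWhile_perm (p : α → Bool) (x : α) (l : List α) :
    (l.takeWhile p ++ x :: l.dropWhile p).Perm (x :: l) :=
  List.perm_middle.trans (by rw [List.takeWhile_append_dropWhile])

def TwoValued (l : List α) : Prop := ∃ u v, ∀ x ∈ l, x = u ∨ x = v

theorem TwoValued.mono {l l' : List α} (h : TwoValued l) (hl : l' ⊆ l) : TwoValued l' :=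
  let ⟨u, v, huv⟩ := h
  ⟨u, v, fun x hx => huv x (hl hx)⟩

theorem twoValued_iff_length_dedup_le_two [DecidableEq α] [Nonempty α] {l : List α} :
    TwoValued l ↔ l.dedup.length ≤ 2 := by
  constructor
  · rintro ⟨u, v, huv⟩
    rw [← List.card_toFinset]
    refine (Finset.card_le_card (t := {u, v}) fun x hx => ?_).trans Finset.card_le_two
    simpa using huv x (List.mem_toFinset.1 hx)
  · intro h
    have hmem : ∀ x ∈ l, x ∈ l.dedup := fun x hx => List.mem_dedup.2 hx
    match hd : l.dedup, h with
    | [], _ => obtain ⟨u⟩ := ‹Nonempty α›; exact ⟨u, u, fun x hx => by simpa [hd] using hmem x hx⟩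
    | [u], _ => exact ⟨u, u, fun x hx => by simpa [hd] using hmem x hx⟩
    | [u, v], _ => exact ⟨u, v, fun x hx => by simpa [hd] using hmem x hx⟩
    | _ :: _ :: _ :: _, h => simp at h

section LinearOrder

variable [LinearOrder α]

/-- The patterns 120, 201 and 210 are exactly the triples of distinct values whose last entry is
smaller than the first. -/
def AllowedTriple (a b c : α) : Prop := c < a → b = a ∨ b = c

inductive TwoValueBlocks : List α → Prop
  | nil : TwoValueBlocks []
  | append {b w : List α} : TwoValued b → (∀ x ∈ b, ∀ y ∈ w, x ≤ y) → TwoValueBlocks w →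
      TwoValueBlocks (b ++ w)

theorem TwoValued.triplewise_allowedTriple {l : List α} (h : TwoValued l) :
    l.Triplewise AllowedTriple := by
  obtain ⟨u, v, huv⟩ := h
  refine List.triplewise_iff_getElem.2 fun i j k _ _ _ hlt => ?_
  have := huv l[i] (List.getElem_mem _)
  have := huv l[j] (List.getElem_mem _)
  have := huv l[k] (List.getElem_mem _)
  grind

theorem TwoValueBlocks.triplewise_allowedTriple {w : List α} (h : TwoValueBlocks w) :
    w.Triplewise AllowedTriple := by
  induction h with
  | nil => exact .nil
  | @append b w hb hle _ ih =>
    refine List.triplewise_append.2 ⟨hb.triplewise_allowedTriple, ih, fun a ha => ?_,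
      fun c hc => ?_⟩
    · exact List.pairwise_of_forall_mem_list fun _ _ y hy hya => absurd (hle a ha y hy) hya.not_ge
    · exact List.pairwise_of_forall_mem_list fun x hx _ _ hcx => absurd (hle x hx c hc) hcx.not_ge

theorem List.Triplewise.twoValueBlocks {w : List α} (h : w.Triplewise AllowedTriple) :
    TwoValueBlocks w := by
  match w, h with
  | [], _ => exact .nil
  | a :: t, h =>
    obtain ⟨ha, ht⟩ := List.triplewise_cons.1 h
    by_cases hex : ∃ c ∈ t, c < a
    · obtain ⟨t₁, c, t₂, rfl, hca, ht₂⟩ := List.exists_eq_append_cons_forall_not hex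
      have hblock : ∀ x ∈ a :: (t₁ ++ [c]), x = a ∨ x = c := by
        intro x hx
        rcases List.mem_cons.1 hx with rfl | hx
        · exact .inl rfl
        rcases List.mem_append.1 hx with hx | hx
        · exact (List.pairwise_append.1 ha).2.2 x hx c List.mem_cons_self hca
        · exact .inr (List.mem_singleton.1 hx)
      have hrest : t₂.Triplewise AllowedTriple :=
        (List.triplewise_cons.1 (List.triplewise_append.1 ht).2.1).2
      rw [show a :: (t₁ ++ c :: t₂) = a :: (t₁ ++ [c]) ++ t₂ by simp]
      refine TwoValueBlocks.append ⟨a, c, hblock⟩ (fun x hx y hy => ?_) hrest.twoValueBlocks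
      have := not_lt.1 (ht₂ y hy)
      rcases hblock x hx with rfl | rfl
      exacts [this, hca.le.trans this]
    · push Not at hex
      exact TwoValueBlocks.append (b := [a]) ⟨a, a, by simp⟩ (by simpa using hex)
        ht.twoValueBlocks
termination_by w.length

end LinearOrder

theorem triplewise_allowedTriple_iff {w : List ℕ} :
    w.Triplewise AllowedTriple ↔ ¬ Contains120 w ∧ ¬ Contains201 w ∧ ¬ Contains210 w := by
  simp only [List.triplewise_iff_getElem, AllowedTriple, Contains120, Contains201, Contains210]
  constructor
  · intro h
    refine ⟨?_, ?_, ?_⟩ <;> rintro ⟨i, j, k, hij, hjk, hk, h₁, h₂⟩ <;>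
      simp only [List.getD_eq_getElem _ _ (by omega : i < w.length),
        List.getD_eq_getElem _ _ (by omega : j < w.length), List.getD_eq_getElem _ _ hk] at h₁ h₂ <;>
      grind
  · rintro ⟨h120, h201, h210⟩ i j k hij hjk hk hlt
    have hi := List.getD_eq_getElem w 0 (by omega : i < w.length)
    have hj := List.getD_eq_getElem w 0 (by omega : j < w.length)
    have hk' := List.getD_eq_getElem w 0 hk
    by_contra hne
    rcases lt_or_gt_of_ne (not_or.1 hne).1 with hji | hij'
    · rcases lt_or_gt_of_ne (not_or.1 hne).2 with hjk' | hkj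
      · exact h201 ⟨i, j, k, hij, hjk, hk, by omega, by omega⟩
      · exact h210 ⟨i, j, k, hij, hjk, hk, by omega, by omega⟩
    · exact h120 ⟨i, j, k, hij, hjk, hk, by omega, by omega⟩

theorem TwoValued.exists_lt {l : List ℕ} (h : TwoValued l) :
    ∃ u v, u < v ∧ ∀ x ∈ l, x = u ∨ x = v := by
  obtain ⟨u, v, huv⟩ := h
  rcases lt_trichotomy u v with hlt | rfl | hgt
  · exact ⟨u, v, hlt, huv⟩
  · exact ⟨u, u + 1, u.lt_succ_self, fun x hx => .inl ((huv x hx).elim id id)⟩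
  · exact ⟨v, u, hgt, fun x hx => (huv x hx).symm⟩

section Machine

open Relation List

theorem exists_perm_of_ps21_run {f : List ℕ} {s : List ℕ × List ℕ × List ℕ}
    (h : ReflTransGen PS21Step s ([], [], f)) : ∃ r, f = s.2.2 ++ r ∧ r.Perm (s.2.1 ++ s.1) := by
  induction h using ReflTransGen.head_induction_on with
  | refl => exact ⟨[], by simp, by simp⟩
  | head step _ ih =>
    obtain ⟨r, rfl, hr⟩ := ih
    cases step with
    | pushTop x xs st out => exact ⟨r, rfl, hr.trans perm_middle.symm⟩
    | pushSecond x xs st out =>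
      exact ⟨r, rfl, hr.trans (((takeWhile_append_cons_dropWhile_perm _ x st).append_right
        xs).trans perm_middle.symm)⟩
    | pop xs st out => exact ⟨st ++ r, append_assoc .., by simpa using hr.append_left st⟩

/-- The invariant of a sorting run, read backwards from its end. -/
def StackBlocks (st xs : List ℕ) : Prop :=
  ∃ b rest, xs = b ++ rest ∧ TwoValued (st ++ b) ∧ (∀ x ∈ st ++ b, ∀ y ∈ rest, x ≤ y) ∧
    TwoValueBlocks rest

theorem StackBlocks.cons_of_perm {st st' xs : List ℕ} {x : ℕ} (h : StackBlocks st' xs)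
    (hst : st'.Perm (x :: st)) : StackBlocks st (x :: xs) := by
  obtain ⟨b, rest, rfl, hb, hle, hrest⟩ := h
  have hperm : (st ++ x :: b).Perm (st' ++ b) := perm_middle.trans (hst.symm.append_right b)
  exact ⟨x :: b, rest, rfl, hb.mono hperm.subset, fun y hy => hle y (hperm.subset hy), hrest⟩

theorem stackBlocks_of_ps21_run {f : List ℕ} (hf : f.Pairwise (· ≤ ·))
    {s : List ℕ × List ℕ × List ℕ} (h : ReflTransGen PS21Step s ([], [], f))
    (hs : TwoValued s.2.1) : StackBlocks s.2.1 s.1 := by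
  induction h using ReflTransGen.head_induction_on with
  | refl => exact ⟨[], [], rfl, by simpa using hs, by simp, .nil⟩
  | head step run ih =>
    cases step with
    | pushTop x xs st out hd =>
      exact (ih (twoValued_iff_length_dedup_le_two.2 hd)).cons_of_perm (Perm.refl _)
    | pushSecond x xs st out _ hd =>
      have hperm := takeWhile_append_cons_dropWhile_perm (fun y => decide (y = st.headI)) x st
      exact (ih ((twoValued_iff_length_dedup_le_two.2 hd).mono hperm.subset)).cons_of_perm hperm
    | pop xs st out _ =>
      obtain ⟨b, rest, rfl, hb, hle, hrest⟩ := ih ⟨0, 0, by simp⟩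
      obtain ⟨r, rfl, hr⟩ := exists_perm_of_ps21_run run
      have hsorted : (st ++ r).Pairwise (· ≤ ·) :=
        (pairwise_append.1 (by simpa using hf : (out ++ (st ++ r)).Pairwise (· ≤ ·))).2.1
      refine ⟨[], b ++ rest, by simp, by simpa using hs, fun x hx y hy => ?_,
        .append (by simpa using hb) (by simpa using hle) hrest⟩
      exact (pairwise_append.1 hsorted).2.2 x (by simpa using hx) y
        (hr.symm.subset (by simpa using hy))

theorem PS21Sortable.twoValueBlocks {w : List ℕ} (h : PS21Sortable w) : TwoValueBlocks w := by
  obtain ⟨f, run, hf⟩ := h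
  obtain ⟨b, rest, rfl, hb, hle, hrest⟩ := stackBlocks_of_ps21_run hf run ⟨0, 0, by simp⟩
  exact .append (by simpa using hb) (by simpa using hle) hrest

theorem length_dedup_cons_replicate_append_le_two {x u v : ℕ} (hx : x = u ∨ x = v) (p q : ℕ) :
    (x :: (replicate p u ++ replicate q v)).dedup.length ≤ 2 := by
  refine twoValued_iff_length_dedup_le_two.1 ⟨u, v, fun y hy => ?_⟩
  simp only [mem_cons, mem_append, mem_replicate] at hy
  grind

theorem ps21Step_push_low (u v p q : ℕ) (rest out : List ℕ) :
    PS21Step (u :: rest, replicate p u ++ replicate q v, out)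
      (rest, replicate (p + 1) u ++ replicate q v, out) :=
  .pushTop _ _ _ _ (length_dedup_cons_replicate_append_le_two (.inl rfl) p q)

theorem ps21Step_push_high {u v : ℕ} (huv : u ≠ v) (p q : ℕ) (rest out : List ℕ) :
    PS21Step (v :: rest, replicate p u ++ replicate q v, out)
      (rest, replicate p u ++ replicate (q + 1) v, out) := by
  have hd := length_dedup_cons_replicate_append_le_two (x := v) (u := u) (.inr rfl) p q
  cases p with
  | zero => exact .pushTop _ _ _ _ hd
  | succ p =>
    convert PS21Step.pushSecond v rest _ out (by simp [replicate_succ]) hd using 3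
    simp [replicate_succ, Ne.symm huv]

theorem reflTransGen_ps21_push {u v : ℕ} (huv : u ≠ v) {b : List ℕ}
    (hb : ∀ x ∈ b, x = u ∨ x = v) (p q : ℕ) (rest out : List ℕ) :
    ReflTransGen PS21Step (b ++ rest, replicate p u ++ replicate q v, out)
      (rest, replicate (p + b.count u) u ++ replicate (q + b.count v) v, out) := by
  induction b generalizing p q with
  | nil => simpa using ReflTransGen.refl
  | cons x b ih =>
    have hb' : ∀ y ∈ b, y = u ∨ y = v := fun y hy => hb y (mem_cons_of_mem x hy)
    rcases hb x mem_cons_self with rfl | rfl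
    · simpa [huv, Nat.add_right_comm, ← Nat.add_assoc]
        using (ih hb' (p + 1) q).head (ps21Step_push_low x v p q (b ++ rest) out)
    · simpa [huv.symm, Nat.add_right_comm, ← Nat.add_assoc]
        using (ih hb' p (q + 1)).head (ps21Step_push_high huv p q (b ++ rest) out)

theorem reflTransGen_ps21_pop (xs st out : List ℕ) :
    ReflTransGen PS21Step (xs, st, out) (xs, [], out ++ st) := by
  rcases eq_or_ne st [] with rfl | hst
  · simpa using ReflTransGen.refl
  · exact .single (.pop xs st out hst)

theorem TwoValueBlocks.exists_ps21_run {w : List ℕ} (h : TwoValueBlocks w) :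
    ∃ s, s.Pairwise (· ≤ ·) ∧ s ⊆ w ∧
      ∀ out, ReflTransGen PS21Step (w, [], out) ([], [], out ++ s) := by
  induction h with
  | nil => exact ⟨[], .nil, nil_subset _, fun out => by simpa using ReflTransGen.refl⟩
  | @append b w hb hle _ ih =>
    obtain ⟨s, hs, hsw, hrun⟩ := ih
    obtain ⟨u, v, huv, hbuv⟩ := hb.exists_lt
    set st := replicate (b.count u) u ++ replicate (b.count v) v
    have hstb : st ⊆ b := fun x hx => by
      simp only [st, mem_append, mem_replicate, ne_eq, count_eq_zero, not_not] at hx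
      grind
    refine ⟨st ++ s, pairwise_append.2 ⟨?_, hs, fun x hx y hy => hle x (hstb hx) y (hsw hy)⟩,
      append_subset.2 ⟨subset_append_of_subset_left _ hstb, subset_append_of_subset_right _ hsw⟩,
      fun out => ?_⟩
    · refine pairwise_append.2 ⟨pairwise_replicate.2 (.inr le_rfl),
        pairwise_replicate.2 (.inr le_rfl), fun x hx y hy => ?_⟩
      rw [(mem_replicate.1 hx).2, (mem_replicate.1 hy).2]
      exact huv.le
    · have := reflTransGen_ps21_push huv.ne hbuv 0 0 w out
      simp only [replicate_zero, nil_append, zero_add] at this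
      simpa using (this.trans (reflTransGen_ps21_pop _ _ _)).trans (hrun (out ++ st))

theorem TwoValueBlocks.ps21Sortable {w : List ℕ} (h : TwoValueBlocks w) : PS21Sortable w :=
  let ⟨s, hs, _, hrun⟩ := h.exists_ps21_run
  ⟨s, by simpa using hrun [], hs⟩

end Machine

/-- A word is sortable by a (2,1)-pop stack of depth two iff it avoids 120, 201, 210. -/
theorem ps21_sortable_iff (w : List ℕ) :
    PS21Sortable w ↔ ¬ Contains120 w ∧ ¬ Contains201 w ∧ ¬ Contains210 w := by
  rw [← triplewise_allowedTriple_iff]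
  exact ⟨fun h => h.twoValueBlocks.triplewise_allowedTriple,
    fun h => h.twoValueBlocks.ps21Sortable⟩
end

section
/- The number of permutations of length n avoiding the patterns 231, 312, and 321 equals the (n+1)st Fibonacci number F_{n+1} (with F_1 = F_2 = 1). -/
/-!
Avoiding 312 and 321 forces `σ i ≤ i + 1`: of the `σ i` positions carrying a smaller value, at
most `i` lie to the left of `i`, and two lying to the right would form a 312 or a 321. The set
{231, 312, 321} is closed under inversion, so also `i ≤ σ i + 1`; conversely each of the three
patterns moves some entry by at least two. A permutation moving every entry by at most one either
fixes `0` or swaps `0` and `1`, and removing this block gives the Fibonacci recursion.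
-/

def PContains231 {n : ℕ} (σ : Equiv.Perm (Fin n)) : Prop :=
  ∃ i j k : Fin n, i < j ∧ j < k ∧ σ k < σ i ∧ σ i < σ j

def PContains312 {n : ℕ} (σ : Equiv.Perm (Fin n)) : Prop :=
  ∃ i j k : Fin n, i < j ∧ j < k ∧ σ j < σ k ∧ σ k < σ i

def PContains321 {n : ℕ} (σ : Equiv.Perm (Fin n)) : Prop :=
  ∃ i j k : Fin n, i < j ∧ j < k ∧ σ k < σ j ∧ σ j < σ i

open Equiv Finset

namespace Equiv.Perm

variable {n : ℕ}

theorem pContains231_of_pContains312_inv {σ : Perm (Fin n)} :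
    PContains312 σ⁻¹ → PContains231 σ := by
  rintro ⟨i, j, k, hij, hjk, h₁, h₂⟩
  exact ⟨σ⁻¹ j, σ⁻¹ k, σ⁻¹ i, h₁, h₂, by simpa using ⟨hij, hjk⟩⟩

theorem pContains321_of_pContains321_inv {σ : Perm (Fin n)} :
    PContains321 σ⁻¹ → PContains321 σ := by
  rintro ⟨i, j, k, hij, hjk, h₁, h₂⟩
  exact ⟨σ⁻¹ k, σ⁻¹ j, σ⁻¹ i, h₁, h₂, by simpa using ⟨hij, hjk⟩⟩

theorem card_filter_apply_lt (σ : Perm (Fin n)) (v : Fin n) : #{x | σ x < v} = v := by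
  rw [← Fin.card_Iio v]
  exact card_equiv σ (by simp)

theorem card_filter_gt_and_apply_lt_le_one {σ : Perm (Fin n)} (h312 : ¬ PContains312 σ)
    (h321 : ¬ PContains321 σ) (i : Fin n) : #{x | i < x ∧ σ x < σ i} ≤ 1 := by
  have no_pair : ∀ j k, i < j → j < k → σ j < σ i → σ k < σ i → False := by
    intro j k hij hjk hj hk
    rcases lt_or_gt_of_ne (σ.injective.ne hjk.ne) with hlt | hgt
    exacts [h312 ⟨i, j, k, hij, hjk, hlt, hk⟩, h321 ⟨i, j, k, hij, hjk, hgt, hj⟩]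
  refine card_le_one.2 fun j hj k hk => ?_
  simp only [mem_filter, mem_univ, true_and] at hj hk
  rcases lt_trichotomy j k with hlt | heq | hgt
  exacts [(no_pair j k hj.1 hlt hj.2 hk.2).elim, heq, (no_pair k j hk.1 hgt hk.2 hj.2).elim]

theorem val_apply_le_succ {σ : Perm (Fin n)} (h312 : ¬ PContains312 σ)
    (h321 : ¬ PContains321 σ) (i : Fin n) : (σ i : ℕ) ≤ i + 1 :=
  calc (σ i : ℕ) = #{x | σ x < σ i} := (card_filter_apply_lt σ (σ i)).symm
    _ ≤ #(Iio i ∪ ({x | i < x ∧ σ x < σ i} : Finset _)) := by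
        refine card_le_card fun x hx => ?_
        simp only [mem_filter, mem_univ, true_and, mem_union, mem_Iio] at hx ⊢
        rcases lt_trichotomy x i with h | rfl | h
        exacts [Or.inl h, (lt_irrefl _ hx).elim, Or.inr ⟨h, hx⟩]
    _ ≤ #(Iio i) + #{x | i < x ∧ σ x < σ i} := card_union_le _ _
    _ ≤ i + 1 := by
        rw [Fin.card_Iio]
        exact Nat.add_le_add_left (card_filter_gt_and_apply_lt_le_one h312 h321 i) _

theorem val_le_apply_succ {σ : Perm (Fin n)} (h231 : ¬ PContains231 σ)
    (h321 : ¬ PContains321 σ) (i : Fin n) : (i : ℕ) ≤ σ i + 1 := by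
  simpa using val_apply_le_succ (mt pContains231_of_pContains312_inv h231)
    (mt pContains321_of_pContains321_inv h321) (σ i)

def MovesAtMostOne (σ : Perm (Fin n)) : Prop :=
  ∀ i, (σ i : ℕ) ≤ i + 1 ∧ (i : ℕ) ≤ σ i + 1

instance : DecidablePred (MovesAtMostOne (n := n)) :=
  fun _ => Fintype.decidableForallFintype

theorem avoids_231_312_321_iff_movesAtMostOne (σ : Perm (Fin n)) :
    (¬ PContains231 σ ∧ ¬ PContains312 σ ∧ ¬ PContains321 σ) ↔ MovesAtMostOne σ := by
  refine ⟨fun ⟨h231, h312, h321⟩ i => ⟨val_apply_le_succ h312 h321 i,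
    val_le_apply_succ h231 h321 i⟩, fun hσ => ?_⟩
  refine ⟨?_, ?_, ?_⟩ <;> rintro ⟨i, j, k, hij, hjk, h₁, h₂⟩ <;>
    · have := hσ i; have := hσ j; have := hσ k
      rw [Fin.lt_def] at hij hjk h₁ h₂
      omega

theorem MovesAtMostOne.apply_one_eq_zero {σ : Perm (Fin (n + 2))} (hσ : MovesAtMostOne σ)
    (h0 : σ 0 = 1) : σ 1 = 0 := by
  obtain ⟨j, hj⟩ := σ.surjective 0
  have hj_le : (j : ℕ) ≤ 1 := by simpa [hj] using (hσ j).2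
  rcases Nat.le_one_iff_eq_zero_or_eq_one.1 hj_le with h | h
  · rw [Fin.ext h (b := 0), h0] at hj
    exact absurd hj one_ne_zero
  · rwa [Fin.ext h (b := 1)] at hj

def liftFixingZero (σ : Perm (Fin n)) : Perm (Fin (n + 1)) :=
  decomposeFin.symm (0, σ)

def liftSwappingZeroOne (σ : Perm (Fin n)) : Perm (Fin (n + 2)) :=
  decomposeFin.symm (1, liftFixingZero σ)

@[simp]
theorem liftFixingZero_apply_zero (σ : Perm (Fin n)) : liftFixingZero σ 0 = 0 :=
  decomposeFin_symm_apply_zero _ _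

@[simp]
theorem liftFixingZero_apply_succ (σ : Perm (Fin n)) (i : Fin n) :
    liftFixingZero σ i.succ = (σ i).succ := by
  simp [liftFixingZero, decomposeFin_symm_apply_succ]

@[simp]
theorem liftSwappingZeroOne_apply_zero (σ : Perm (Fin n)) : liftSwappingZeroOne σ 0 = 1 :=
  decomposeFin_symm_apply_zero _ _

@[simp]
theorem liftSwappingZeroOne_apply_succ_succ (σ : Perm (Fin n)) (i : Fin n) :
    liftSwappingZeroOne σ i.succ.succ = (σ i).succ.succ := by
  rw [liftSwappingZeroOne, decomposeFin_symm_apply_succ, liftFixingZero_apply_succ,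
    swap_apply_of_ne_of_ne (Fin.succ_ne_zero _) (Fin.succ_succ_ne_one _)]

@[simp]
theorem liftSwappingZeroOne_apply_one (σ : Perm (Fin n)) : liftSwappingZeroOne σ 1 = 0 := by
  simp [liftSwappingZeroOne, decomposeFin_symm_apply_one]

theorem liftFixingZero_injective : Function.Injective (liftFixingZero (n := n)) :=
  decomposeFin.symm.injective.comp (Prod.mk_right_injective 0)

theorem liftSwappingZeroOne_injective : Function.Injective (liftSwappingZeroOne (n := n)) :=
  decomposeFin.symm.injective.comp ((Prod.mk_right_injective 1).comp liftFixingZero_injective)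

@[simp]
theorem movesAtMostOne_liftFixingZero_iff {σ : Perm (Fin n)} :
    MovesAtMostOne (liftFixingZero σ) ↔ MovesAtMostOne σ := by
  simp [MovesAtMostOne, Fin.forall_fin_succ]

@[simp]
theorem movesAtMostOne_liftSwappingZeroOne_iff {σ : Perm (Fin n)} :
    MovesAtMostOne (liftSwappingZeroOne σ) ↔ MovesAtMostOne σ := by
  simp [MovesAtMostOne, Fin.forall_fin_succ]

theorem exists_liftFixingZero_eq {τ : Perm (Fin (n + 1))} (h0 : τ 0 = 0) :
    ∃ σ, liftFixingZero σ = τ := by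
  obtain ⟨⟨p, σ⟩, rfl⟩ := decomposeFin.symm.surjective τ
  rw [decomposeFin_symm_apply_zero] at h0
  exact ⟨σ, h0 ▸ rfl⟩

theorem exists_liftSwappingZeroOne_eq {τ : Perm (Fin (n + 2))} (h0 : τ 0 = 1) (h1 : τ 1 = 0) :
    ∃ σ, liftSwappingZeroOne σ = τ := by
  obtain ⟨⟨p, ρ⟩, rfl⟩ := decomposeFin.symm.surjective τ
  rw [decomposeFin_symm_apply_zero] at h0
  subst h0
  rw [decomposeFin_symm_apply_one, swap_apply_eq_iff, swap_apply_left, ← Fin.succ_zero_eq_one,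
    Fin.succ_inj] at h1
  obtain ⟨σ, rfl⟩ := exists_liftFixingZero_eq h1
  exact ⟨σ, rfl⟩

theorem MovesAtMostOne.exists_lift {τ : Perm (Fin (n + 2))} (hτ : MovesAtMostOne τ) :
    (∃ σ, MovesAtMostOne σ ∧ liftFixingZero σ = τ) ∨
      ∃ σ, MovesAtMostOne σ ∧ liftSwappingZeroOne σ = τ := by
  have h0 : τ 0 = 0 ∨ τ 0 = 1 := by
    have := (hτ 0).1
    simp only [Fin.val_zero, zero_add] at this
    rcases Nat.le_one_iff_eq_zero_or_eq_one.1 this with h | h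
    exacts [.inl (Fin.ext h), .inr (Fin.ext h)]
  rcases h0 with h0 | h0
  · obtain ⟨σ, rfl⟩ := exists_liftFixingZero_eq h0
    exact .inl ⟨σ, movesAtMostOne_liftFixingZero_iff.1 hτ, rfl⟩
  · obtain ⟨σ, rfl⟩ := exists_liftSwappingZeroOne_eq h0 (hτ.apply_one_eq_zero h0)
    exact .inr ⟨σ, movesAtMostOne_liftSwappingZeroOne_iff.1 hτ, rfl⟩

theorem filter_movesAtMostOne_eq_union :
    ({τ | MovesAtMostOne τ} : Finset (Perm (Fin (n + 2)))) =
      ({σ | MovesAtMostOne σ} : Finset _).image liftFixingZero ∪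
        ({σ | MovesAtMostOne σ} : Finset _).image liftSwappingZeroOne := by
  ext τ
  simp only [mem_union, mem_image, mem_filter, mem_univ, true_and]
  refine ⟨MovesAtMostOne.exists_lift, ?_⟩
  rintro (⟨σ, hσ, rfl⟩ | ⟨σ, hσ, rfl⟩) <;> simpa

theorem disjoint_image_liftFixingZero_image_liftSwappingZeroOne
    (s : Finset (Perm (Fin (n + 1)))) (t : Finset (Perm (Fin n))) :
    _root_.Disjoint (s.image liftFixingZero) (t.image liftSwappingZeroOne) := by
  simp only [disjoint_left, mem_image]
  rintro _ ⟨σ, -, rfl⟩ ⟨ρ, -, h⟩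
  simpa using congrArg (· 0) h

theorem card_filter_movesAtMostOne :
    ∀ n, #{σ : Perm (Fin n) | MovesAtMostOne σ} = Nat.fib (n + 1)
  | 0 | 1 => by decide
  | n + 2 => by
    rw [filter_movesAtMostOne_eq_union,
      card_union_of_disjoint (disjoint_image_liftFixingZero_image_liftSwappingZeroOne _ _),
      card_image_of_injective _ liftFixingZero_injective,
      card_image_of_injective _ liftSwappingZeroOne_injective,
      card_filter_movesAtMostOne (n + 1), card_filter_movesAtMostOne n, add_comm]
    exact Nat.fib_add_two.symm

end Equiv.Perm

/-- The number of permutations of length n avoiding 231, 312 and 321 is the (n+1)st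
Fibonacci number (with F_1 = F_2 = 1). -/
theorem avoid_231_312_321_fib (n : ℕ) :
    Set.ncard {σ : Equiv.Perm (Fin n) |
        ¬ PContains231 σ ∧ ¬ PContains312 σ ∧ ¬ PContains321 σ} = Nat.fib (n + 1) := by
  simp only [Perm.avoids_231_312_321_iff_movesAtMostOne]
  rw [Set.ncard_eq_toFinset_card', Set.toFinset_ofPred, Perm.card_filter_movesAtMostOne]
end

section
/- An inversion sequence e of length n avoiding 120, 201, 1010 with exactly n-1 layers has a unique index i ≥ 2 such that e_i does not start a new layer, and necessarily e_m = m-1 for all m < i and either e_i = i-2 or e_i = i-3. -/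
/-- Weak descents `w[j] ≥ w[j+1]`, recorded by the 0-based `j`; in the 1-based indexing of the
main theorem this is the pair `(e_{j+1}, e_{j+2})`. -/
def descents (w : List ℕ) : Finset ℕ :=
  (Finset.range (w.length - 1)).filter fun j => w.getD (j + 1) 0 ≤ w.getD j 0

lemma mem_descents {w : List ℕ} {j : ℕ} :
    j ∈ descents w ↔ j + 1 < w.length ∧ w.getD (j + 1) 0 ≤ w.getD j 0 := by
  simp only [descents, Finset.mem_filter, Finset.mem_range]
  omega

lemma descents_nil : descents [] = ∅ := rfl

lemma descents_singleton (a : ℕ) : descents [a] = ∅ := rfl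

lemma card_descents_cons_cons (a b : ℕ) (l : List ℕ) :
    (descents (a :: b :: l)).card = (descents (b :: l)).card + if b ≤ a then 1 else 0 := by
  simp only [descents, Finset.card_filter, List.length_cons, Nat.add_sub_cancel,
    Finset.sum_range_succ', List.getD_cons_succ, List.getD_cons_zero]

namespace IsLayeredDecomp

variable {a b : ℕ} {w t : List ℕ} {L : List (List ℕ)}

lemma eq_nil_of_nil (h : IsLayeredDecomp [] L) : L = [] := by
  obtain ⟨hflat, hlayers, -⟩ := h
  cases L with
  | nil => rfl
  | cons t L' =>
    have := (hlayers t List.mem_cons_self).1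
    simp_all

lemma exists_eq_cons (h : IsLayeredDecomp (a :: w) L) :
    ∃ t L', L = (a :: t) :: L' ∧ w = t ++ L'.flatten := by
  obtain ⟨hflat, hlayers, -⟩ := h
  match L, hlayers with
  | [] :: _, hlayers => exact absurd rfl (hlayers [] List.mem_cons_self).1
  | (c :: t) :: L', _ =>
    simp only [List.flatten_cons, List.cons_append, List.cons.injEq] at hflat
    exact ⟨t, L', by rw [hflat.1], hflat.2⟩

lemma of_cons_singleton (h : IsLayeredDecomp (a :: w) ([a] :: L)) : IsLayeredDecomp w L := by
  obtain ⟨hflat, hlayers, hchain⟩ := h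
  exact ⟨by simpa using hflat, fun t ht => hlayers t (List.mem_cons_of_mem _ ht), hchain.tail⟩

lemma of_cons_cons (h : IsLayeredDecomp (a :: w) ((a :: b :: t) :: L)) :
    IsLayeredDecomp w ((b :: t) :: L) := by
  obtain ⟨hflat, hlayers, hchain⟩ := h
  have hdec := (hlayers _ List.mem_cons_self).2
  refine ⟨by simpa using hflat, ?_, ?_⟩
  · rintro t' (_ | ⟨_, ht'⟩)
    · exact ⟨List.cons_ne_nil _ _, hdec.tail⟩
    · exact hlayers t' (List.mem_cons_of_mem _ ht')
  · cases L with
    | nil => exact List.isChain_singleton _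
    | cons t' L' =>
      obtain ⟨⟨hlast, hhead⟩, htail⟩ := List.isChain_cons_cons.mp hchain
      refine List.isChain_cons_cons.mpr ⟨⟨?_, ?_⟩, htail⟩
      · simpa [List.getLastD_cons] using hlast
      · exact (List.isChain_cons_cons.mp hdec).1.trans hhead

theorem length_add_card_descents (h : IsLayeredDecomp w L) :
    L.length + (descents w).card = w.length := by
  induction w generalizing L with
  | nil => simp [h.eq_nil_of_nil, descents_nil]
  | cons a w ih =>
    obtain ⟨t, L', rfl, hw⟩ := h.exists_eq_cons
    cases t with
    | nil =>
      have ih := ih h.of_cons_singleton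
      cases L' with
      | nil => simp_all [descents_singleton]
      | cons t' L'' =>
        obtain ⟨c, t', rfl⟩ := List.exists_cons_of_ne_nil (h.2.1 t' (by simp)).1
        have hac : a < c := (List.isChain_cons_cons.mp h.2.2).1.1
        simp only [List.nil_append, List.flatten_cons, List.cons_append] at hw
        subst hw
        simp only [card_descents_cons_cons, List.length_cons] at ih ⊢
        rw [if_neg (Nat.not_le.mpr hac)]
        omega
    | cons b t =>
      have ih := ih h.of_cons_cons
      have hba : b ≤ a := (List.isChain_cons_cons.mp (h.2.1 _ List.mem_cons_self).2).1
      simp only [List.cons_append] at hw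
      subst hw
      simp only [card_descents_cons_cons, if_pos hba, List.length_cons] at ih ⊢
      omega

end IsLayeredDecomp

lemma IsInvSeq.getD_eq_self_of_lt_descents {e : List ℕ} (hinv : IsInvSeq e) {j : ℕ}
    (hj : j < e.length) (hasc : ∀ k < j, k ∉ descents e) : ∀ k ≤ j, e.getD k 0 = k := by
  intro k hk
  induction k with
  | zero => exact Nat.le_zero.mp (hinv 0 (by omega))
  | succ k ih =>
    have hle := hinv (k + 1) (by omega)
    have hk' := hasc k (by omega)
    rw [mem_descents, ih (by omega)] at hk'
    omega

lemma sub_one_le_getD_of_not_contains120 {e : List ℕ} (h120 : ¬ Contains120 e) {j : ℕ}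
    (hj : j + 1 < e.length) (hprev : e.getD (j - 1) 0 = j - 1) (hcur : e.getD j 0 = j) :
    j - 1 ≤ e.getD (j + 1) 0 := by
  by_contra! hlt
  exact h120 ⟨j - 1, j, j + 1, by omega, by omega, hj, by omega, by omega⟩

/-- Entries are 1-indexed as `e.getD (i - 1) 0`; in a layered word the entry `e_i` with
`i ≥ 2` starts a new layer iff `e_{i-1} < e_i`. -/
theorem unique_non_layer_start_general (e : List ℕ) (hn : 1 ≤ e.length) (hinv : IsInvSeq e)
    (h120 : ¬ Contains120 e)
    (hlay : HasLayers e (e.length - 1)) :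
    (∃! i : ℕ, 2 ≤ i ∧ i ≤ e.length ∧ e.getD (i - 1) 0 ≤ e.getD (i - 2) 0) ∧
    ∀ i : ℕ, 2 ≤ i → i ≤ e.length → e.getD (i - 1) 0 ≤ e.getD (i - 2) 0 →
      (∀ m : ℕ, 1 ≤ m → m < i → e.getD (m - 1) 0 = m - 1) ∧
      (e.getD (i - 1) 0 = i - 2 ∨ e.getD (i - 1) 0 = i - 3) := by
  obtain ⟨L, hL, hlen⟩ := hlay
  have hcard : (descents e).card = 1 := by
    have := hL.length_add_card_descents
    omega
  obtain ⟨j, hj⟩ := Finset.card_eq_one.mp hcard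
  have hnonstart : ∀ i, 2 ≤ i →
      (i ≤ e.length ∧ e.getD (i - 1) 0 ≤ e.getD (i - 2) 0 ↔ i = j + 2) := by
    intro i hi
    obtain ⟨k, rfl⟩ := Nat.exists_eq_add_of_le' hi
    have hk := Finset.ext_iff.mp hj k
    rw [mem_descents, Finset.mem_singleton] at hk
    rw [show k + 2 - 1 = k + 1 by omega, show k + 2 - 2 = k by omega]
    omega
  have hjmem : j ∈ descents e := by simp [hj]
  obtain ⟨hjlen, hjdesc⟩ := mem_descents.mp hjmem
  have hprefix : ∀ k ≤ j, e.getD k 0 = k :=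
    hinv.getD_eq_self_of_lt_descents (by omega) fun k hk => by simp [hj]; omega
  have hlower := sub_one_le_getD_of_not_contains120 h120 hjlen (hprefix _ (Nat.sub_le j 1))
    (hprefix j le_rfl)
  refine ⟨⟨j + 2, ⟨le_add_self, (hnonstart _ le_add_self).mpr rfl⟩,
    fun i ⟨hi, hrest⟩ => (hnonstart i hi).mp hrest⟩, ?_⟩
  intro i hi hle hdesc
  obtain rfl := (hnonstart i hi).mp ⟨hle, hdesc⟩
  refine ⟨fun m hm hmi => hprefix (m - 1) (by omega), ?_⟩
  rw [hprefix j le_rfl] at hjdesc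
  rw [show j + 2 - 1 = j + 1 by omega]
  omega

/-- In a layered word, the (1-indexed) entry e_i starts a new layer iff i = 1 or
e_i > e_{i-1}; so e_i fails to start a new layer iff e_i ≤ e_{i-1}.  An inversion
sequence e of length n avoiding 120, 201, 1010 with exactly n-1 layers has a unique index
i ≥ 2 with e_i ≤ e_{i-1}; moreover for this index, e_m = m-1 for all m < i, and either
e_i = i-2 or e_i = i-3.  (Entries are accessed 1-indexed via e.getD (i-1) 0.) -/
theorem unique_non_layer_start (e : List ℕ) (hn : 1 ≤ e.length) (hinv : IsInvSeq e)
    (h120 : ¬ Contains120 e) (h201 : ¬ Contains201 e) (h1010 : ¬ Contains1010 e)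
    (hlay : HasLayers e (e.length - 1)) :
    (∃! i : ℕ, 2 ≤ i ∧ i ≤ e.length ∧ e.getD (i - 1) 0 ≤ e.getD (i - 2) 0) ∧
    ∀ i : ℕ, 2 ≤ i → i ≤ e.length → e.getD (i - 1) 0 ≤ e.getD (i - 2) 0 →
      (∀ m : ℕ, 1 ≤ m → m < i → e.getD (m - 1) 0 = m - 1) ∧
      (e.getD (i - 1) 0 = i - 2 ∨ e.getD (i - 1) 0 = i - 3) :=
  unique_non_layer_start_general e hn hinv h120 hlay
end
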